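/- arXiv:2402.04393 — 5 statements merged into one kernel-verified Lean document; each statement's English description precedes it below -/
import Mathlib

section
/- For integers n ≥ 0 and k with k < -n, and real numbers s, t, the integral (1/2π) ∫₀^{2π} L_n(s² + t² + 2st·cosθ) · e^{-ikθ} · exp(-st·e^{iθ}) dθ equals 0, where L_n is the n-th Laguerre polynomial. -/
open Real MeasureTheory intervalIntegral Finset

/-- Generalized (associated) Laguerre polynomial `L_n^k(x)` for integer parameter `k`,
via the standard explicit sum formula. -/
noncomputable def glag (n : ℕ) (k : ℤ) (x : ℝ) : ℝ :=
  ∑ i ∈ Finset.range (n + 1),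
    (-1 : ℝ) ^ i / (Nat.factorial i) *
      ((∏ j ∈ Finset.Ico i n, ((k : ℝ) + j + 1)) / Nat.factorial (n - i)) * x ^ i

/-- The `n`-th Laguerre polynomial. -/
noncomputable def lag (n : ℕ) (x : ℝ) : ℝ := glag n 0 x

/-- Complex version of the generalized Laguerre polynomial. -/
noncomputable def glagC (n : ℕ) (k : ℤ) (x : ℂ) : ℂ :=
  ∑ i ∈ Finset.range (n + 1),
    (-1 : ℂ) ^ i / (Nat.factorial i) *
      ((∏ j ∈ Finset.Ico i n, ((k : ℂ) + j + 1)) / Nat.factorial (n - i)) * x ^ i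

/-- `I_{n,k}(s,t)`. -/
noncomputable def lagInt (n : ℕ) (k : ℤ) (s t : ℝ) : ℂ :=
  (1 / (2 * Real.pi)) *
    ∫ θ in (0:ℝ)..(2 * Real.pi),
      (lag n (s ^ 2 + t ^ 2 + 2 * s * t * Real.cos θ) : ℂ) *
        Complex.exp (-(k : ℂ) * Complex.I * θ) *
        Complex.exp (-(s : ℂ) * t * Complex.exp (Complex.I * θ))

/-- `I¹_{n,k}(s,t)` (with `L_n` replaced by `L_n^1`). -/
noncomputable def lagInt1 (n : ℕ) (k : ℤ) (s t : ℝ) : ℂ :=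
  (1 / (2 * Real.pi)) *
    ∫ θ in (0:ℝ)..(2 * Real.pi),
      (glag n 1 (s ^ 2 + t ^ 2 + 2 * s * t * Real.cos θ) : ℂ) *
        Complex.exp (-(k : ℂ) * Complex.I * θ) *
        Complex.exp (-(s : ℂ) * t * Complex.exp (Complex.I * θ))

/-- Bessel function of the first kind of natural order. -/
noncomputable def besselJn (m : ℕ) (x : ℝ) : ℝ :=
  ∑' j : ℕ, (-1 : ℝ) ^ j / (Nat.factorial j * Nat.factorial (j + m)) * (x / 2) ^ (2 * j + m)

/-- Bessel function of the first kind of integer order. -/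
noncomputable def besselJ (m : ℤ) (x : ℝ) : ℝ :=
  if 0 ≤ m then besselJn m.toNat x else (-1 : ℝ) ^ (-m).toNat * besselJn (-m).toNat x

theorem stmt0 (n : ℕ) (k : ℤ) (hk : k < -(n : ℤ)) (s t : ℝ) :
    lagInt n k s t = 0 := by
  obtain ⟨m, hm⟩ : ∃ m : ℕ, (m : ℤ) = -k - n - 1 :=
    ⟨(-k - n - 1).toNat, Int.toNat_of_nonneg (by omega)⟩
  set c : ℕ → ℂ := fun i => (-1 : ℂ) ^ i / (Nat.factorial i) *
      ((∏ j ∈ Finset.Ico i n, (((0:ℤ) : ℂ) + j + 1)) / Nat.factorial (n - i)) with hc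
  set P : ℂ → ℂ := fun z => ∑ i ∈ Finset.range (n + 1),
      c i * z ^ (n - i) * ((s:ℂ) * t + ((s:ℂ)^2 + (t:ℂ)^2) * z + (s:ℂ) * t * z^2) ^ i with hP
  set g : ℂ → ℂ := fun z => -Complex.I * z ^ m * P z * Complex.exp (-(s:ℂ) * t * z) with hg
  have hPd : Differentiable ℂ P := by
    apply Differentiable.fun_sum
    intro i _
    fun_prop
  have hgd : Differentiable ℂ g := by fun_prop
  have h0 : (∮ z in C((0:ℂ), 1), g z) = 0 :=
    Complex.circleIntegral_eq_zero_of_differentiable_on_off_countable zero_le_one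
      Set.countable_empty hgd.continuous.continuousOn (fun z _ => hgd z)
  rw [circleIntegral] at h0
  unfold lagInt
  rw [show (∫ θ in (0:ℝ)..(2 * Real.pi),
      (lag n (s ^ 2 + t ^ 2 + 2 * s * t * Real.cos θ) : ℂ) *
        Complex.exp (-(k : ℂ) * Complex.I * θ) *
        Complex.exp (-(s : ℂ) * t * Complex.exp (Complex.I * θ)))
      = ∫ θ in (0:ℝ)..(2 * Real.pi),
        deriv (circleMap 0 1) θ • g (circleMap 0 1 θ) from ?_, h0, mul_zero]
  apply intervalIntegral.integral_congr
  intro θ _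
  set z : ℂ := Complex.exp (θ * Complex.I) with hz
  have hzne : z ≠ 0 := Complex.exp_ne_zero _
  have hcm : circleMap 0 1 θ = z := by simp [circleMap, hz]
  have hdm : deriv (circleMap 0 1) θ = z * Complex.I := by
    rw [deriv_circleMap, hcm]
  have hz2 : Complex.exp (Complex.I * θ) = z := by rw [hz, mul_comm]
  -- key identity 1 : 2 cos θ * z = z^2 + 1
  have hcos : 2 * Complex.cos θ * z = z ^ 2 + 1 := by
    simp only [Complex.cos, hz]
    have h1 : Complex.exp (-↑θ * Complex.I) * Complex.exp (↑θ * Complex.I) = 1 := by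
      rw [← Complex.exp_add]; ring_nf; exact Complex.exp_zero
    linear_combination h1
  -- key identity 2 : x * z
  have hx : ((s:ℂ) ^ 2 + (t:ℂ) ^ 2 + 2 * (s:ℂ) * (t:ℂ) * Complex.cos (θ:ℝ)) * z
      = (s:ℂ) * t + ((s:ℂ)^2 + (t:ℂ)^2) * z + (s:ℂ) * t * z^2 := by
    have h2 : (2 : ℂ) * s * t * Complex.cos θ * z = s * t * (z ^ 2 + 1) := by
      rw [← hcos]; ring
    linear_combination h2
  -- identity : lag * z^n = P z
  have hlag : ((lag n (s ^ 2 + t ^ 2 + 2 * s * t * Real.cos θ) : ℝ) : ℂ) * z ^ n = P z := by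
    rw [lag, glag, hP]
    push_cast
    rw [Finset.sum_mul]
    apply Finset.sum_congr rfl
    intro i hi
    rw [Finset.mem_range] at hi
    have hzn : z ^ n = z ^ i * z ^ (n - i) := by rw [← pow_add]; congr 1; omega
    rw [← hx, mul_pow, hzn]
    simp only [hc]
    push_cast
    ring
  -- identity : exp(-k I θ) = z ^ (m + 1 + n)
  have hexp : Complex.exp (-(k : ℂ) * Complex.I * θ) = z ^ (m + 1 + n) := by
    have hk' : -(k : ℂ) = ((m + 1 + n : ℕ) : ℂ) := by
      push_cast
      have h3 : (m : ℝ) = -(k:ℝ) - n - 1 := by exact_mod_cast congrArg (Int.cast : ℤ → ℝ) hm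
      norm_num [Complex.ext_iff, h3]
    rw [hk', hz, ← Complex.exp_nat_mul]
    ring_nf
  dsimp only
  rw [hcm, hdm, hexp, hz2, smul_eq_mul]
  simp only [hg]
  linear_combination (z^(m+1) * Complex.exp (-(s:ℂ)*t*z)) * hlag +
    (z^(m+1) * P z * Complex.exp (-(s:ℂ)*t*z)) * Complex.I_mul_I
end

section
/- For integers n ≥ 0 and k ≥ -n, and real numbers s, t, the integral (1/2π) ∫₀^{2π} L_n(s² + t² + 2st·cosθ) · e^{-ikθ} · exp(-st·e^{iθ}) dθ equals (-1)^k · (n!/(n+k)!) · (st)^k · L_n^k(s²) · L_n^k(t²), where L_n^k is the generalized Laguerre polynomial. -/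
open Real MeasureTheory intervalIntegral Finset

lemma arg_factor (s t θ : ℝ) :
    ((s^2 + t^2 + 2*s*t*Real.cos θ : ℝ) : ℂ)
      = ((s:ℂ) + t * Complex.exp (Complex.I * θ)) * ((s:ℂ) + t * Complex.exp (-(Complex.I * θ))) := by
  have hc : Complex.cos (θ:ℂ) = (Complex.exp (Complex.I * θ) + Complex.exp (-(Complex.I * θ))) / 2 := by
    rw [Complex.cos]
    ring_nf
  have he : Complex.exp (Complex.I * θ) * Complex.exp (-(Complex.I * θ)) = 1 := by
    rw [← Complex.exp_add]; simp
  push_cast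
  rw [hc]
  have expand : ((s:ℂ) + t * Complex.exp (Complex.I * θ)) * ((s:ℂ) + t * Complex.exp (-(Complex.I * θ)))
      = (s:ℂ)^2 + (t:ℂ)^2 * (Complex.exp (Complex.I * θ) * Complex.exp (-(Complex.I * θ)))
        + s * t * (Complex.exp (Complex.I * θ) + Complex.exp (-(Complex.I * θ))) := by ring
  rw [expand, he]
  ring

lemma fact_mul_prod (i n : ℕ) (h : i ≤ n) :
    (i.factorial * ∏ j ∈ Finset.Ico i n, (j+1)) = n.factorial := by
  induction n with
  | zero => interval_cases i; simp
  | succ n ih =>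
    rcases Nat.lt_or_ge i (n+1) with h'|h'
    · have hi : i ≤ n := by omega
      rw [Finset.prod_Ico_succ_top hi, ← mul_assoc, ih hi, Nat.factorial_succ]; ring
    · have hie : i = n+1 := by omega
      subst hie; simp

lemma lagC (n : ℕ) (x : ℝ) : ((lag n x : ℝ) : ℂ)
    = ∑ i ∈ Finset.range (n+1),
        (-1:ℂ)^i / i.factorial * ((n.factorial / i.factorial : ℂ) / (n-i).factorial) * (x:ℂ)^i := by
  rw [lag, glag, Complex.ofReal_sum]
  refine Finset.sum_congr rfl (fun i hi => ?_)
  have hin : i ≤ n := by simp at hi; omega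
  push_cast
  have hprod : (∏ x ∈ Finset.Ico i n, ((0:ℂ) + (x:ℂ) + 1)) = (n.factorial / i.factorial : ℂ) := by
    have h1 : (∏ x ∈ Finset.Ico i n, ((0:ℂ) + x + 1)) = ((∏ j ∈ Finset.Ico i n, (j+1) : ℕ) : ℂ) := by
      rw [Nat.cast_prod]; exact Finset.prod_congr rfl (fun j _ => by push_cast; ring)
    rw [h1, eq_div_iff (by exact_mod_cast (Nat.factorial_pos i).ne' : (i.factorial:ℂ) ≠ 0), mul_comm, ← Nat.cast_mul,
      fact_mul_prod i n hin]
  rw [hprod]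

lemma integrand_expand (n : ℕ) (k : ℤ) (s t θ : ℝ) :
    ((lag n (s ^ 2 + t ^ 2 + 2 * s * t * Real.cos θ) : ℝ) : ℂ) *
        Complex.exp (-(k : ℂ) * Complex.I * θ) *
        Complex.exp (-(s : ℂ) * t * Complex.exp (Complex.I * θ))
      = ∑ i ∈ Finset.range (n+1), ∑ a ∈ Finset.range (i+1), ∑ b ∈ Finset.range (i+1),
          ((-1:ℂ)^i / i.factorial * ((n.factorial / i.factorial : ℂ)) / (n-i).factorial
            * (i.choose a) * (i.choose b) * (s:ℂ)^(2*i-a-b) * (t:ℂ)^(a+b))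
          * (Complex.exp ((((a:ℤ) - b - k) : ℤ) * Complex.I * θ)
              * Complex.exp (-(s:ℂ) * t * Complex.exp (Complex.I * θ))) := by
  rw [lagC, arg_factor, Finset.sum_mul, Finset.sum_mul]
  refine Finset.sum_congr rfl (fun i hi => ?_)
  have h1 : ((s:ℂ) + t * Complex.exp (Complex.I * θ))^i
      = ∑ a ∈ Finset.range (i+1),
          ((t:ℂ) * Complex.exp (Complex.I * θ))^a * (s:ℂ)^(i-a) * (i.choose a) := by
    rw [add_comm, add_pow]
  have h2 : ((s:ℂ) + t * Complex.exp (-(Complex.I * θ)))^i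
      = ∑ b ∈ Finset.range (i+1),
          ((t:ℂ) * Complex.exp (-(Complex.I * θ)))^b * (s:ℂ)^(i-b) * (i.choose b) := by
    rw [add_comm, add_pow]
  rw [mul_pow, h1, h2, Finset.sum_mul_sum]
  simp only [Finset.sum_mul, Finset.mul_sum]
  refine Finset.sum_congr rfl (fun a ha => Finset.sum_congr rfl (fun b hb => ?_))
  have hai : a ≤ i := by simp at ha; omega
  have hbi : b ≤ i := by simp at hb; omega
  have hz : Complex.exp (Complex.I * θ) ^ a = Complex.exp ((a:ℂ) * (Complex.I * θ)) := by
    rw [← Complex.exp_nat_mul]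
  have hw : Complex.exp (-(Complex.I * θ)) ^ b = Complex.exp ((b:ℂ) * (-(Complex.I * θ))) := by
    rw [← Complex.exp_nat_mul]
  have hexp : Complex.exp ((((a:ℤ) - b - k) : ℤ) * Complex.I * θ)
      = Complex.exp ((a:ℂ) * (Complex.I * θ)) * Complex.exp ((b:ℂ) * (-(Complex.I * θ)))
        * Complex.exp (-(k:ℂ) * Complex.I * θ) := by
    rw [← Complex.exp_add, ← Complex.exp_add]
    congr 1
    push_cast
    ring
  have hs : (s:ℂ)^(2*i-a-b) = (s:ℂ)^(i-a) * (s:ℂ)^(i-b) := by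
    rw [← pow_add]; congr 1; omega
  have ht : (t:ℂ)^(a+b) = (t:ℂ)^a * (t:ℂ)^b := by rw [← pow_add]
  rw [hexp, hs, ht, mul_pow, mul_pow, hz, hw]
  ring

lemma expSeries' (z : ℂ) : Complex.exp z = ∑' j : ℕ, z^j / j.factorial := by
  rw [Complex.exp_eq_exp_ℂ, NormedSpace.exp_eq_tsum_div]

lemma orth (m : ℤ) : (∫ θ in (0:ℝ)..(2*π), Complex.exp (m * Complex.I * θ)) =
    if m = 0 then (2*π : ℂ) else 0 := by
  rcases eq_or_ne m 0 with h | h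
  · simp [h]
  · have hc : (m : ℂ) * Complex.I ≠ 0 := by
      simp [Complex.ext_iff, h, Complex.I_ne_zero, mul_ne_zero]
    rw [if_neg h, integral_exp_mul_complex hc]
    have h2 : Complex.exp ((m:ℂ) * Complex.I * (2*π)) = 1 := by
      have h3 : (m:ℂ) * Complex.I * (2*π) = (m:ℤ) * (2 * π * Complex.I) := by
        ring
      rw [h3, Complex.exp_int_mul_two_pi_mul_I m]
    simp [h2]

lemma normF (m : ℤ) (c : ℂ) (j : ℕ) (θ : ℝ) :
    ‖Complex.exp (m * Complex.I * θ) * ((c * Complex.exp (Complex.I * θ))^j / j.factorial)‖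
      = ‖c‖^j / j.factorial := by
  have h1 : ‖(Complex.exp (m * Complex.I * θ))‖ = 1 := by
    have : (m:ℂ) * Complex.I * θ = ((m * θ : ℝ) : ℂ) * Complex.I := by push_cast; ring
    rw [this, Complex.norm_exp_ofReal_mul_I]
  have h2 : ‖(Complex.exp (Complex.I * θ))‖ = 1 := by
    rw [mul_comm, Complex.norm_exp_ofReal_mul_I]
  simp [map_mul, map_div₀, map_pow, h1, h2, Complex.norm_natCast]

lemma key (c : ℂ) (m : ℤ) :
    (∫ θ in (0:ℝ)..(2*π), Complex.exp (m * Complex.I * θ) *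
        Complex.exp (c * Complex.exp (Complex.I * θ)))
      = if 0 ≤ -m then 2*π * c^(-m).toNat / ((-m).toNat).factorial else 0 := by
  have h2pi : (0:ℝ) ≤ 2*π := by positivity
  set F : ℕ → ℝ → ℂ := fun j θ =>
    Complex.exp (m * Complex.I * θ) * ((c * Complex.exp (Complex.I * θ))^j / j.factorial) with hF
  have hcont : ∀ j, Continuous (F j) := by
    intro j; fun_prop
  have hpt : ∀ θ : ℝ, Complex.exp (m * Complex.I * θ) *
      Complex.exp (c * Complex.exp (Complex.I * θ)) = ∑' j : ℕ, F j θ := by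
    intro θ
    rw [expSeries' (c * Complex.exp (Complex.I * θ)), ← tsum_mul_left]
  have hint : ∀ j, IntegrableOn (F j) (Set.Ioc 0 (2*π)) volume :=
    fun j => (hcont j).integrableOn_Ioc
  have hnorm : ∀ j, (∫ θ in Set.Ioc (0:ℝ) (2*π), ‖F j θ‖) = (2*π) * (‖c‖^j / j.factorial) := by
    intro j
    simp only [hF, normF m c j]
    rw [setIntegral_const]
    simp [Real.volume_Ioc, ENNReal.toReal_ofReal h2pi, Real.pi_pos.le]
  have hsum : Summable fun j => ∫ θ in Set.Ioc (0:ℝ) (2*π), ‖F j θ‖ := by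
    simp only [hnorm]
    exact (Real.summable_pow_div_factorial ‖c‖).mul_left _
  have hswap : (∫ θ in Set.Ioc (0:ℝ) (2*π), ∑' j, F j θ) = ∑' j, ∫ θ in Set.Ioc (0:ℝ) (2*π), F j θ :=
    (MeasureTheory.integral_tsum_of_summable_integral_norm hint hsum).symm
  have hterm : ∀ j : ℕ, (∫ θ in Set.Ioc (0:ℝ) (2*π), F j θ)
      = (c^j / j.factorial) * (if (m + j : ℤ) = 0 then (2*π : ℂ) else 0) := by
    intro j
    have hFj : ∀ θ : ℝ, F j θ = (c^j / j.factorial) * Complex.exp (((m + j : ℤ)) * Complex.I * θ) := by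
      intro θ
      have : Complex.exp (Complex.I * θ) ^ j = Complex.exp ((j:ℂ) * (Complex.I * θ)) := by
        rw [← Complex.exp_nat_mul]
      simp only [hF]
      rw [mul_pow, this,
        show ((m + (j:ℤ) : ℤ):ℂ) * Complex.I * θ = (m:ℂ)*Complex.I*θ + (j:ℂ)*(Complex.I*θ) by
          push_cast; ring, Complex.exp_add]
      ring
    simp only [hFj]
    rw [MeasureTheory.integral_const_mul, ← intervalIntegral.integral_of_le h2pi, orth]
  calc (∫ θ in (0:ℝ)..(2*π), Complex.exp (m * Complex.I * θ) *
        Complex.exp (c * Complex.exp (Complex.I * θ)))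
      = ∫ θ in Set.Ioc (0:ℝ) (2*π), ∑' j, F j θ := by
        rw [intervalIntegral.integral_of_le h2pi]
        exact setIntegral_congr_fun measurableSet_Ioc (fun θ _ => hpt θ)
    _ = ∑' j : ℕ, (c^j / (j.factorial:ℂ)) * (if (m + (j:ℤ) : ℤ) = 0 then (2*π : ℂ) else 0) := by
        rw [hswap]; exact tsum_congr hterm
    _ = if 0 ≤ -m then 2*π * c^(-m).toNat / ((-m).toNat).factorial else 0 := by
        by_cases hm : 0 ≤ -m
        · rw [if_pos hm]
          rw [tsum_eq_single (-m).toNat]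
          · rw [if_pos (by omega)]
            ring
          · intro j hj
            rw [if_neg (by omega), mul_zero]
        · rw [if_neg hm]
          convert tsum_zero with j
          rw [if_neg (by omega), mul_zero]

noncomputable def cf (n i a b : ℕ) (s t : ℝ) : ℂ :=
  (-1:ℂ)^i / i.factorial * ((n.factorial / i.factorial : ℂ)) / (n-i).factorial
    * (i.choose a) * (i.choose b) * (s:ℂ)^(2*i-a-b) * (t:ℂ)^(a+b)

lemma lagInt_eq (n : ℕ) (k : ℤ) (s t : ℝ) :
    lagInt n k s t = ∑ i ∈ Finset.range (n+1), ∑ a ∈ Finset.range (i+1), ∑ b ∈ Finset.range (i+1),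
      cf n i a b s t *
        (if 0 ≤ k + b - a then (-(s:ℂ)*t)^((k+b-a).toNat) / (((k+b-a).toNat).factorial : ℂ) else 0) := by
  have hcF : ∀ (m:ℤ) (C:ℂ), Continuous (fun θ:ℝ =>
      C * (Complex.exp ((m:ℂ)*Complex.I*θ) * Complex.exp (-(s:ℂ)*t*Complex.exp (Complex.I*θ)))) := by
    intro m C; fun_prop
  set F : ℕ → ℕ → ℕ → ℝ → ℂ := fun i a b θ =>
    cf n i a b s t * (Complex.exp ((((a:ℤ) - b - k) : ℤ) * Complex.I * θ)
        * Complex.exp (-(s:ℂ) * t * Complex.exp (Complex.I * θ))) with hFdef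
  have hFc : ∀ i a b, Continuous (F i a b) := fun i a b => hcF _ _
  rw [lagInt]
  have e0 : (∫ θ in (0:ℝ)..(2*π),
      ((lag n (s ^ 2 + t ^ 2 + 2 * s * t * Real.cos θ) : ℝ) : ℂ) *
        Complex.exp (-(k : ℂ) * Complex.I * θ) *
        Complex.exp (-(s : ℂ) * t * Complex.exp (Complex.I * θ)))
      = ∫ θ in (0:ℝ)..(2*π), ∑ i ∈ Finset.range (n+1), ∑ a ∈ Finset.range (i+1),
          ∑ b ∈ Finset.range (i+1), F i a b θ := by
    refine intervalIntegral.integral_congr (fun θ _ => ?_)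
    simpa [hFdef, cf, mul_assoc] using integrand_expand n k s t θ
  rw [e0]
  rw [intervalIntegral.integral_finset_sum (fun i _ =>
    ((continuous_finset_sum _ (fun a _ => continuous_finset_sum _ (fun b _ => hFc i a b))).intervalIntegrable _ _))]
  rw [Finset.mul_sum]
  refine Finset.sum_congr rfl (fun i _ => ?_)
  rw [intervalIntegral.integral_finset_sum (fun a _ =>
    ((continuous_finset_sum _ (fun b _ => hFc i a b)).intervalIntegrable _ _))]
  rw [Finset.mul_sum]
  refine Finset.sum_congr rfl (fun a _ => ?_)
  rw [intervalIntegral.integral_finset_sum (fun b _ => (hFc i a b).intervalIntegrable _ _)]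
  rw [Finset.mul_sum]
  refine Finset.sum_congr rfl (fun b _ => ?_)
  rw [hFdef]
  rw [intervalIntegral.integral_const_mul, key (-(s:ℂ)*t) ((a:ℤ) - b - k)]
  have hm : -((a:ℤ) - b - k) = k + b - a := by ring
  rw [hm]
  have hπ : ((π:ℝ):ℂ) ≠ 0 := by exact_mod_cast Real.pi_ne_zero
  have key2 : ∀ C X f : ℂ, 1/(2*(π:ℂ)) * (C * (2*(π:ℂ) * X / f)) = C * (X / f) := by
    intro C X f
    have h2π : (2*(π:ℂ)) ≠ 0 := mul_ne_zero two_ne_zero hπ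
    rw [show 1/(2*(π:ℂ)) * (C * (2*(π:ℂ) * X / f)) = (2*(π:ℂ))/(2*(π:ℂ)) * (C * (X/f)) by ring,
      div_self h2π, one_mul]
  split_ifs with h
  · exact key2 _ _ _
  · simp

lemma fact_mul_prod_int (k : ℤ) (p : ℕ) (hkp : 0 ≤ k + p) :
    ∀ n : ℕ, p ≤ n →
    (((k+p).toNat.factorial : ℂ) * ∏ j ∈ Finset.Ico p n, ((k:ℂ)+j+1)) = ((k+n).toNat.factorial : ℂ) := by
  intro n
  induction n with
  | zero => intro h; have : p = 0 := by omega
            subst this; simp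
  | succ n ih =>
    intro h
    rcases Nat.lt_or_ge p (n+1) with h'|h'
    · have hpn : p ≤ n := by omega
      rw [Finset.prod_Ico_succ_top hpn, ← mul_assoc, ih hpn]
      have h1 : (k + ((n+1:ℕ):ℤ)).toNat = (k+n).toNat + 1 := by push_cast; omega
      rw [h1, Nat.factorial_succ]
      have h3 : (((k+(n:ℤ)).toNat : ℕ) : ℂ) = (k:ℂ) + n := by
        exact_mod_cast congrArg (fun z : ℤ => (z : ℂ)) (Int.toNat_of_nonneg (by omega : (0:ℤ) ≤ k + n))
      push_cast [h3]
      ring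
    · have : p = n+1 := by omega
      subst this; simp

lemma dzero (k : ℤ) (p n : ℕ) (hk : -(n:ℤ) ≤ k) (h : k + p < 0) :
    (∏ j ∈ Finset.Ico p n, ((k:ℂ)+j+1)) = 0 := by
  refine Finset.prod_eq_zero (i := (-k-1).toNat) ?_ ?_
  · simp only [Finset.mem_Ico]; omega
  · have h2 : (((-k-1).toNat : ℕ) : ℂ) = ((-k-1 : ℤ) : ℂ) := by
      exact_mod_cast congrArg (fun z : ℤ => (z : ℂ)) (Int.toNat_of_nonneg (by omega : (0:ℤ) ≤ -k-1))
    rw [h2]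
    push_cast
    ring

lemma sign_helper (k : ℤ) (i E pq : ℕ) (h : k = (i:ℤ) + E - pq) :
    (-1:ℂ)^k * (-1:ℂ)^pq = (-1:ℂ)^i * (-1:ℂ)^E := by
  subst h
  rw [show ((i:ℤ) + E - pq) = ((i + E : ℕ):ℤ) - (pq:ℤ) by push_cast; ring,
    zpow_sub₀ (by norm_num : (-1:ℂ) ≠ 0), zpow_natCast, zpow_natCast, pow_add,
    div_mul_cancel₀ _ (pow_ne_zero _ (by norm_num : (-1:ℂ) ≠ 0))]

lemma nat_core (i n p q κq Kt : ℕ) (hpi : p ≤ i) (hqi : q ≤ i) (hin : i ≤ n) (hiK : i ≤ Kt)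
    (hrel : Kt = κq + p) :
    (i.choose (i-p)) * (i.choose q) * (p.factorial * q.factorial * (n-q).factorial * κq.factorial)
      = ((n-q).choose (i-q)) * (κq.choose (Kt-i))
          * (i.factorial * i.factorial * (n-i).factorial * (Kt-i).factorial) := by
  have e1 : (i.choose (i-p)) * ((i-p).factorial * p.factorial) = i.factorial := by
    have := Nat.choose_mul_factorial_mul_factorial (Nat.sub_le i p)
    rw [Nat.sub_sub_self hpi] at this
    rw [← this]; ring
  have e2 : (i.choose q) * (q.factorial * (i-q).factorial) = i.factorial := by
    have := Nat.choose_mul_factorial_mul_factorial hqi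
    rw [← this]; ring
  have e3 : ((n-q).choose (i-q)) * ((i-q).factorial * (n-i).factorial) = (n-q).factorial := by
    have h' : i - q ≤ n - q := by omega
    have := Nat.choose_mul_factorial_mul_factorial h'
    rw [show n - q - (i-q) = n - i by omega] at this
    rw [← this]; ring
  have e4 : (κq.choose (Kt-i)) * ((Kt-i).factorial * (i-p).factorial) = κq.factorial := by
    have h' : Kt - i ≤ κq := by omega
    have := Nat.choose_mul_factorial_mul_factorial h'
    rw [show κq - (Kt-i) = i - p by omega] at this
    rw [← this]; ring
  calc (i.choose (i-p)) * (i.choose q) * (p.factorial * q.factorial * (n-q).factorial * κq.factorial)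
      = (i.choose (i-p)) * (i.choose q) * (p.factorial * q.factorial *
          (((n-q).choose (i-q)) * ((i-q).factorial * (n-i).factorial)) *
          (((κq.choose (Kt-i)) * ((Kt-i).factorial * (i-p).factorial)))) := by rw [e3, e4]
    _ = ((n-q).choose (i-q)) * (κq.choose (Kt-i)) *
          (((i.choose (i-p)) * ((i-p).factorial * p.factorial)) *
           ((i.choose q) * (q.factorial * (i-q).factorial)) *
           ((n-i).factorial * (Kt-i).factorial)) := by ring
    _ = _ := by rw [e1, e2]; ring

lemma scalar_core (i n p q κq Kt : ℕ) (hpi : p ≤ i) (hqi : q ≤ i) (hin : i ≤ n) (hiK : i ≤ Kt)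
    (hrel : Kt = κq + p) :
    (1:ℂ)/i.factorial * ((n.factorial : ℂ)/i.factorial)/(n-i).factorial
        * (i.choose (i-p)) * (i.choose q) / ((Kt - i).factorial)
      = (n.factorial:ℂ)/(p.factorial*q.factorial*(n-q).factorial*κq.factorial)
          * (((n-q).choose (i-q) * (κq.choose (Kt-i)) : ℕ):ℂ) := by
  have hc : ((((i.choose (i-p)) * (i.choose q) * (p.factorial * q.factorial * (n-q).factorial * κq.factorial) : ℕ)) : ℂ)
      = ((((n-q).choose (i-q)) * (κq.choose (Kt-i))
          * (i.factorial * i.factorial * (n-i).factorial * (Kt-i).factorial) : ℕ) : ℂ) := by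
    exact_mod_cast congrArg (fun z : ℕ => (z:ℂ)) (nat_core i n p q κq Kt hpi hqi hin hiK hrel)
  push_cast at hc
  have f1 : ((i.factorial : ℕ) : ℂ) ≠ 0 := by exact_mod_cast (Nat.factorial_pos i).ne'
  have f2 : (((n-i).factorial : ℕ) : ℂ) ≠ 0 := by exact_mod_cast (Nat.factorial_pos (n-i)).ne'
  have f3 : (((Kt-i).factorial : ℕ) : ℂ) ≠ 0 := by exact_mod_cast (Nat.factorial_pos (Kt-i)).ne'
  have f4 : ((p.factorial : ℕ) : ℂ) ≠ 0 := by exact_mod_cast (Nat.factorial_pos p).ne'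
  have f5 : ((q.factorial : ℕ) : ℂ) ≠ 0 := by exact_mod_cast (Nat.factorial_pos q).ne'
  have f6 : (((n-q).factorial : ℕ) : ℂ) ≠ 0 := by exact_mod_cast (Nat.factorial_pos (n-q)).ne'
  have f7 : ((κq.factorial : ℕ) : ℂ) ≠ 0 := by exact_mod_cast (Nat.factorial_pos κq).ne'
  rw [Nat.choose_symm hpi] at hc ⊢
  field_simp
  push_cast
  linear_combination (n.factorial:ℂ) * hc

lemma mono (s t : ℂ) (k : ℤ) (p q : ℕ) (hp : 0 ≤ k + p) (hq : 0 ≤ k + q) :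
    s^((2*(p:ℤ)+k).toNat) * t^((2*(q:ℤ)+k).toNat) = (s*t)^k * s^(2*p) * t^(2*q) := by
  rcases le_or_gt 0 k with hk | hk
  · rw [show ((2*(p:ℤ)+k).toNat) = 2*p + k.toNat by omega,
      show ((2*(q:ℤ)+k).toNat) = 2*q + k.toNat by omega,
      show (s*t)^k = (s*t)^(k.toNat) by rw [← zpow_natCast]; congr 1; omega,
      pow_add, pow_add, mul_pow]
    ring
  · set m := (-k).toNat with hm
    have hmk : k = -(m:ℤ) := by omega
    have hpm : m ≤ p := by omega
    have hqm : m ≤ q := by omega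
    have hA : (2*(p:ℤ)+k).toNat = 2*p - m := by omega
    have hB : (2*(q:ℤ)+k).toNat = 2*q - m := by omega
    rcases eq_or_ne (s*t) 0 with h0 | h0
    · rcases mul_eq_zero.mp h0 with h | h
      · subst h
        rw [hA, hB]
        simp [zero_pow (show 2*p - m ≠ 0 by omega), zero_pow (show 2*p ≠ 0 by omega),
          zero_zpow k (by omega)]
      · subst h
        rw [hA, hB]
        simp [zero_pow (show 2*q - m ≠ 0 by omega), zero_pow (show 2*q ≠ 0 by omega),
          zero_zpow k (by omega)]
    · have hs : s ≠ 0 := fun h => h0 (by rw [h]; ring)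
      have ht : t ≠ 0 := fun h => h0 (by rw [h]; ring)
      rw [hA, hB, show (s*t)^k = ((s*t)^m)⁻¹ by
        rw [← zpow_natCast (s*t) m, ← zpow_neg]
        exact congrArg (fun z : ℤ => (s*t)^z) (show k = -(m:ℤ) by omega)]
      rw [mul_pow]
      have es : s ^ (2*p) = s^(2*p - m) * s^m := by rw [← pow_add]; congr 1; omega
      have et : t ^ (2*q) = t^(2*q - m) * t^m := by rw [← pow_add]; congr 1; omega
      rw [es, et]
      field_simp

lemma vander_nat (n : ℕ) (k : ℤ) (p q : ℕ) (hp : p ≤ n) (hq : q ≤ n)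
    (hkp : 0 ≤ k + p) (hkq : 0 ≤ k + q) :
    (∑ i ∈ Finset.Icc (max p q) n,
        if i ≤ (k+p+q).toNat then ((n-q).choose (i-q) * ((k+q).toNat).choose ((k+p+q).toNat-i)) else 0)
      = ((k+n).toNat).choose ((k+p).toNat) := by
  set κp := (k+p).toNat with hκp
  set κq := (k+q).toNat with hκq
  set Kt := (k+p+q).toNat with hKt
  have base := Nat.add_choose_eq (n-q) κq κp
  rw [Finset.Nat.sum_antidiagonal_eq_sum_range_succ_mk] at base
  have hnk : (n - q) + κq = (k+n).toNat := by omega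
  rw [hnk] at base
  rw [← Finset.sum_filter]
  have hfilter : (Finset.Icc (max p q) n).filter (fun i => i ≤ Kt) = Finset.Icc (max p q) (min n Kt) := by
    ext i
    simp only [Finset.mem_filter, Finset.mem_Icc]
    omega
  rw [hfilter]
  have hsub : Finset.Icc (max p q) (min n Kt) ⊆ Finset.Icc q Kt := by
    intro i hi
    simp only [Finset.mem_Icc] at hi ⊢
    omega
  have hzero : ∀ i ∈ Finset.Icc q Kt, i ∉ Finset.Icc (max p q) (min n Kt) →
      (n-q).choose (i-q) * κq.choose (Kt-i) = 0 := by
    intro i hi hni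
    simp only [Finset.mem_Icc] at hi
    simp only [Finset.mem_Icc, not_and, not_le] at hni
    rcases Nat.lt_or_ge i p with h'|h'
    · have : κq < Kt - i := by omega
      rw [Nat.choose_eq_zero_of_lt this, mul_zero]
    · have : n < i := by omega
      rw [Nat.choose_eq_zero_of_lt (show n - q < i - q by omega), zero_mul]
  rw [Finset.sum_subset hsub hzero]
  rw [show Finset.Icc q Kt = Finset.Ico q (Kt+1) by rw [Finset.Ico_add_one_right_eq_Icc],
    Finset.sum_Ico_eq_sum_range]
  rw [base]
  refine Finset.sum_congr (by congr 1; omega) (fun x hx => ?_)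
  simp only [Finset.mem_range] at hx
  congr 1
  · congr 1; omega
  · congr 1; omega

lemma Spq (n : ℕ) (k : ℤ) (hk : -(n:ℤ) ≤ k) (s t : ℝ) (p q : ℕ) (hp : p ≤ n) (hq : q ≤ n) :
    (∑ i ∈ Finset.Icc (max p q) n, cf n i (i-p) q s t *
      (if 0 ≤ k + (q:ℤ) - ((i-p : ℕ) : ℤ) then
        (-(s:ℂ)*t)^((k + (q:ℤ) - ((i-p : ℕ) : ℤ)).toNat) / (((k + (q:ℤ) - ((i-p : ℕ) : ℤ)).toNat).factorial : ℂ)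
      else 0))
    = (-1:ℂ)^k * ((n.factorial:ℂ)/((((n:ℤ)+k).toNat).factorial)) * ((s:ℂ)*t)^k *
        ((-1:ℂ)^p/p.factorial * ((∏ j ∈ Finset.Ico p n, ((k:ℂ)+j+1))/(n-p).factorial) * (s:ℂ)^(2*p)) *
        ((-1:ℂ)^q/q.factorial * ((∏ j ∈ Finset.Ico q n, ((k:ℂ)+j+1))/(n-q).factorial) * (t:ℂ)^(2*q)) := by
  by_cases hcase : 0 ≤ k + p ∧ 0 ≤ k + q
  case neg =>
    have hLHS : ∀ i ∈ Finset.Icc (max p q) n, cf n i (i-p) q s t *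
        (if 0 ≤ k + (q:ℤ) - ((i-p : ℕ) : ℤ) then
          (-(s:ℂ)*t)^((k + (q:ℤ) - ((i-p : ℕ) : ℤ)).toNat) / (((k + (q:ℤ) - ((i-p : ℕ) : ℤ)).toNat).factorial : ℂ)
        else 0) = 0 := by
      intro i hi
      simp only [Finset.mem_Icc, max_le_iff] at hi
      rcases not_and_or.mp hcase with h|h
      · rw [if_neg (by omega), mul_zero]
      · rw [if_neg (by omega), mul_zero]
    rw [Finset.sum_eq_zero hLHS]
    rcases not_and_or.mp hcase with h|h
    · rw [dzero k p n hk (by omega)]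
      ring
    · rw [dzero k q n hk (by omega)]
      ring
  case pos =>
    obtain ⟨hkp, hkq⟩ := hcase
    set κp := (k+p).toNat with hκp
    set κq := (k+q).toNat with hκq
    set Kt := (k+p+q).toNat with hKt
    set N := (k+n).toNat with hN
    have hprodp : (∏ j ∈ Finset.Ico p n, ((k:ℂ)+j+1)) = (N.factorial : ℂ) / (κp.factorial : ℂ) := by
      rw [eq_div_iff (by exact_mod_cast (Nat.factorial_pos κp).ne' : (κp.factorial:ℂ) ≠ 0), mul_comm]
      exact fact_mul_prod_int k p hkp n hp
    have hprodq : (∏ j ∈ Finset.Ico q n, ((k:ℂ)+j+1)) = (N.factorial : ℂ) / (κq.factorial : ℂ) := by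
      rw [eq_div_iff (by exact_mod_cast (Nat.factorial_pos κq).ne' : (κq.factorial:ℂ) ≠ 0), mul_comm]
      exact fact_mul_prod_int k q hkq n hq
    have hNc : ((n:ℤ)+k).toNat = N := by omega
    set D : ℂ := (-1:ℂ)^k * (-1:ℂ)^(p+q) * (s:ℂ)^((2*(p:ℤ)+k).toNat) * (t:ℂ)^((2*(q:ℤ)+k).toNat)
        * ((n.factorial:ℂ)/(p.factorial*q.factorial*(n-q).factorial*κq.factorial)) with hD
    have hterm : ∀ i ∈ Finset.Icc (max p q) n, cf n i (i-p) q s t *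
        (if 0 ≤ k + (q:ℤ) - ((i-p : ℕ) : ℤ) then
          (-(s:ℂ)*t)^((k + (q:ℤ) - ((i-p : ℕ) : ℤ)).toNat) / (((k + (q:ℤ) - ((i-p : ℕ) : ℤ)).toNat).factorial : ℂ)
        else 0)
        = D * (if i ≤ Kt then (((n-q).choose (i-q) * κq.choose (Kt-i) : ℕ) : ℂ) else 0) := by
      intro i hi
      simp only [Finset.mem_Icc, max_le_iff] at hi
      obtain ⟨⟨hpi, hqi⟩, hin⟩ := hi
      by_cases hI : i ≤ Kt
      · have hcond : 0 ≤ k + (q:ℤ) - ((i-p:ℕ):ℤ) := by omega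
        rw [if_pos hcond, if_pos hI]
        have hE : (k + (q:ℤ) - ((i-p:ℕ):ℤ)).toNat = Kt - i := by omega
        rw [hE]
        have hneg : (-(s:ℂ)*t)^(Kt-i) = (-1:ℂ)^(Kt-i) * ((s:ℂ)^(Kt-i) * (t:ℂ)^(Kt-i)) := by
          rw [show (-(s:ℂ)*t) = (-1) * s * t by ring, mul_pow, mul_pow]; ring
        have hs : (s:ℂ)^(2*i-(i-p)-q) * (s:ℂ)^(Kt-i) = (s:ℂ)^((2*(p:ℤ)+k).toNat) := by
          rw [← pow_add]; congr 1; omega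
        have ht : (t:ℂ)^((i-p)+q) * (t:ℂ)^(Kt-i) = (t:ℂ)^((2*(q:ℤ)+k).toNat) := by
          rw [← pow_add]; congr 1; omega
        have hsign := sign_helper k i (Kt - i) (p+q) (by omega)
        have hscal := scalar_core i n p q κq Kt hpi hqi hin hI (by omega)
        rw [cf, hneg, hD]
        calc (-1:ℂ)^i / i.factorial * ((n.factorial / i.factorial : ℂ)) / (n-i).factorial
              * ((i.choose (i-p)) : ℂ) * ((i.choose q) : ℂ) * (s:ℂ)^(2*i-(i-p)-q) * (t:ℂ)^((i-p)+q)
              * ((-1:ℂ)^(Kt-i) * ((s:ℂ)^(Kt-i) * (t:ℂ)^(Kt-i)) / ((Kt-i).factorial : ℂ))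
            = ((-1:ℂ)^i * (-1:ℂ)^(Kt-i)) * (((s:ℂ)^(2*i-(i-p)-q) * (s:ℂ)^(Kt-i)) * ((t:ℂ)^((i-p)+q) * (t:ℂ)^(Kt-i)))
              * ((1:ℂ)/i.factorial * ((n.factorial : ℂ)/i.factorial)/(n-i).factorial
                  * (i.choose (i-p)) * (i.choose q) / ((Kt - i).factorial)) := by ring
          _ = ((-1:ℂ)^k * (-1:ℂ)^(p+q)) * ((s:ℂ)^((2*(p:ℤ)+k).toNat) * (t:ℂ)^((2*(q:ℤ)+k).toNat))
              * ((n.factorial:ℂ)/(p.factorial*q.factorial*(n-q).factorial*κq.factorial)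
                  * (((n-q).choose (i-q) * (κq.choose (Kt-i)) : ℕ):ℂ)) := by
              rw [← hsign, hs, ht, hscal]
          _ = _ := by ring
      · have hcond : ¬ (0 ≤ k + (q:ℤ) - ((i-p:ℕ):ℤ)) := by omega
        rw [if_neg hcond, if_neg hI, mul_zero, mul_zero]
    rw [Finset.sum_congr rfl hterm, ← Finset.mul_sum]
    have hcastsum : (∑ i ∈ Finset.Icc (max p q) n, (if i ≤ Kt then (((n-q).choose (i-q) * κq.choose (Kt-i) : ℕ) : ℂ) else 0))
        = ((N.choose κp : ℕ) : ℂ) := by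
      have := vander_nat n k p q hp hq hkp hkq
      rw [← this]
      rw [Nat.cast_sum]
      refine Finset.sum_congr rfl (fun i _ => ?_)
      split_ifs <;> simp [hκq, hKt]
    have f1 : ∀ m : ℕ, ((m.factorial : ℕ) : ℂ) ≠ 0 := fun m => by
      exact_mod_cast (Nat.factorial_pos m).ne'
    have hmono := mono (s:ℂ) (t:ℂ) k p q hkp hkq
    have hchoose : ((N.choose κp : ℕ) : ℂ) * (κp.factorial : ℂ) * ((n-p).factorial : ℂ) = (N.factorial : ℂ) := by
      have h1 : κp ≤ N := by omega
      have h2 := Nat.choose_mul_factorial_mul_factorial h1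
      rw [show N - κp = n - p by omega] at h2
      exact_mod_cast congrArg (fun z : ℕ => (z:ℂ)) h2
    have hC : ((N.choose κp : ℕ):ℂ) = (N.factorial:ℂ)/((κp.factorial:ℂ) * ((n-p).factorial:ℂ)) := by
      rw [eq_div_iff (mul_ne_zero (f1 κp) (f1 (n-p)))]
      linear_combination hchoose
    have hre : (-1:ℂ)^k * ((n.factorial:ℂ)/(N.factorial:ℂ)) * ((s:ℂ)*t)^k *
        ((-1:ℂ)^p/p.factorial * (((N.factorial:ℂ)/(κp.factorial:ℂ))/(n-p).factorial) * (s:ℂ)^(2*p)) *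
        ((-1:ℂ)^q/q.factorial * (((N.factorial:ℂ)/(κq.factorial:ℂ))/(n-q).factorial) * (t:ℂ)^(2*q))
        = ((s:ℂ)*t)^k * (s:ℂ)^(2*p) * (t:ℂ)^(2*q) *
          ((-1:ℂ)^k * (-1:ℂ)^p * (-1:ℂ)^q * ((n.factorial:ℂ)/(N.factorial:ℂ))
            * ((N.factorial:ℂ)/(κp.factorial:ℂ))/(n-p).factorial/p.factorial
            * ((N.factorial:ℂ)/(κq.factorial:ℂ))/(n-q).factorial/q.factorial) := by
      ring
    rw [hcastsum, hprodp, hprodq, hNc, hD, hC, hre]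
    rw [show ((s:ℂ)*t)^k * (s:ℂ)^(2*p) * (t:ℂ)^(2*q) = (s:ℂ)^((2*(p:ℤ)+k).toNat) * (t:ℂ)^((2*(q:ℤ)+k).toNat) from hmono.symm]
    have hNe : (N.factorial : ℂ) ≠ 0 := f1 N
    linear_combination (-((-1:ℂ)^k * (-1:ℂ)^(p+q) * (s:ℂ)^((2*(p:ℤ)+k).toNat) * (t:ℂ)^((2*(q:ℤ)+k).toNat)
      * ((n.factorial:ℂ)/((p.factorial:ℂ)*(q.factorial:ℂ)*((n-q).factorial:ℂ)*(κq.factorial:ℂ)))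
      * ((N.factorial:ℂ)/((κp.factorial:ℂ)*((n-p).factorial:ℂ))))) * (mul_inv_cancel₀ hNe)

lemma glag_cast (n : ℕ) (k : ℤ) (x : ℝ) : ((glag n k x : ℝ):ℂ)
    = ∑ p ∈ Finset.range (n+1),
        (-1:ℂ)^p/p.factorial * ((∏ j ∈ Finset.Ico p n, ((k:ℂ)+j+1))/(n-p).factorial) * (x:ℂ)^p := by
  rw [glag, Complex.ofReal_sum]
  refine Finset.sum_congr rfl (fun p _ => ?_)
  push_cast
  ring

theorem stmt1 (n : ℕ) (k : ℤ) (hk : -(n : ℤ) ≤ k) (s t : ℝ) :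
    lagInt n k s t =
      (-1 : ℂ) ^ k * ((Nat.factorial n : ℂ) / (Nat.factorial ((n : ℤ) + k).toNat)) *
        ((s : ℂ) * t) ^ k * (glag n k (s ^ 2) : ℂ) * (glag n k (t ^ 2) : ℂ) := by
  rw [lagInt_eq, glag_cast, glag_cast]
  simp only [Complex.ofReal_pow, ← pow_mul]
  have step2 : (∑ i ∈ Finset.range (n+1), ∑ a ∈ Finset.range (i+1), ∑ b ∈ Finset.range (i+1),
      cf n i a b s t *
        (if 0 ≤ k + b - a then (-(s:ℂ)*t)^((k+b-a).toNat) / (((k+b-a).toNat).factorial : ℂ) else 0))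
    = ∑ p ∈ Finset.range (n+1), ∑ q ∈ Finset.range (n+1), ∑ i ∈ Finset.Icc (max p q) n,
        cf n i (i-p) q s t *
          (if 0 ≤ k + (q:ℤ) - ((i-p:ℕ):ℤ) then
            (-(s:ℂ)*t)^((k + (q:ℤ) - ((i-p:ℕ):ℤ)).toNat) / (((k + (q:ℤ) - ((i-p:ℕ):ℤ)).toNat).factorial : ℂ)
          else 0) := by
    calc (∑ i ∈ Finset.range (n+1), ∑ a ∈ Finset.range (i+1), ∑ b ∈ Finset.range (i+1),
        cf n i a b s t *
          (if 0 ≤ k + b - a then (-(s:ℂ)*t)^((k+b-a).toNat) / (((k+b-a).toNat).factorial : ℂ) else 0))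
        = ∑ i ∈ Finset.range (n+1), ∑ p ∈ Finset.range (i+1), ∑ b ∈ Finset.range (i+1),
            cf n i (i-p) b s t *
              (if 0 ≤ k + (b:ℤ) - ((i-p:ℕ):ℤ) then
                (-(s:ℂ)*t)^((k + (b:ℤ) - ((i-p:ℕ):ℤ)).toNat) / (((k + (b:ℤ) - ((i-p:ℕ):ℤ)).toNat).factorial : ℂ)
              else 0) := by
          refine Finset.sum_congr rfl (fun i _ => ?_)
          rw [← Finset.sum_range_reflect]
          simp only [Nat.add_sub_cancel]
      _ = ∑ p ∈ Finset.range (n+1), ∑ i ∈ Finset.Icc p n, ∑ b ∈ Finset.range (i+1),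
            cf n i (i-p) b s t *
              (if 0 ≤ k + (b:ℤ) - ((i-p:ℕ):ℤ) then
                (-(s:ℂ)*t)^((k + (b:ℤ) - ((i-p:ℕ):ℤ)).toNat) / (((k + (b:ℤ) - ((i-p:ℕ):ℤ)).toNat).factorial : ℂ)
              else 0) := by
          exact Finset.sum_comm' (fun i p => by
            simp only [Finset.mem_range, Finset.mem_Icc]; omega)
      _ = _ := by
          refine Finset.sum_congr rfl (fun p _ => ?_)
          exact Finset.sum_comm' (fun i q => by
            simp only [Finset.mem_range, Finset.mem_Icc, max_le_iff]; omega)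
  rw [step2]
  have hswap : ∀ (c : ℂ) (f g : ℕ → ℂ),
      c * (∑ p ∈ Finset.range (n+1), f p) * (∑ q ∈ Finset.range (n+1), g q)
        = ∑ p ∈ Finset.range (n+1), ∑ q ∈ Finset.range (n+1), c * f p * g q := by
    intro c f g
    rw [mul_assoc, Finset.sum_mul_sum, Finset.mul_sum]
    exact Finset.sum_congr rfl (fun p _ => by
      rw [Finset.mul_sum]
      exact Finset.sum_congr rfl (fun q _ => by ring))
  rw [hswap]
  refine Finset.sum_congr rfl (fun p hp => Finset.sum_congr rfl (fun q hq => ?_))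
  simp only [Finset.mem_range] at hp hq
  rw [Spq n k hk s t p q (by omega) (by omega)]
end

section
/- Let I_{n,k}(s,t) = (1/2π) ∫₀^{2π} L_n(s²+t²+2st·cosθ) · e^{-ikθ} · exp(-st·e^{iθ}) dθ and I^1_{n,k}(s,t) be defined analogously with L_n replaced by L_n^1. Then for positive reals s, t and n ≥ 1: s·∂I_{n,k}/∂s − t·∂I_{n,k}/∂t = −2(s² − t²)·I^1_{n-1,k}(s,t). -/
open Real MeasureTheory intervalIntegral Finset

/-! ### Auxiliary lemmas -/

lemma lag_hasDerivAt (m : ℕ) (y : ℝ) :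
    HasDerivAt (lag (m + 1)) (-(glag m 1 y)) y := by
  have h : HasDerivAt (lag (m + 1))
      (∑ i ∈ Finset.range (m + 1 + 1),
        (-1 : ℝ) ^ i / (Nat.factorial i) *
          ((∏ j ∈ Finset.Ico i (m + 1), ((0 : ℝ) + j + 1)) / Nat.factorial (m + 1 - i)) *
          (↑i * y ^ (i - 1))) y := by
    unfold lag glag
    push_cast
    exact HasDerivAt.fun_sum fun i _ => (hasDerivAt_pow i y).const_mul _
  convert h using 1
  rw [Finset.sum_range_succ']
  simp only [Nat.cast_zero, zero_mul, mul_zero, add_zero]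
  unfold glag
  rw [← Finset.sum_neg_distrib]
  refine Finset.sum_congr rfl fun i hi => ?_
  have hP : (∏ j ∈ Finset.Ico (i + 1) (m + 1), ((0 : ℝ) + j + 1))
      = ∏ j ∈ Finset.Ico i m, ((1 : ℝ) + j + 1) := by
    rw [Finset.prod_Ico_eq_prod_range, Finset.prod_Ico_eq_prod_range]
    simp only [Nat.succ_sub_succ]
    refine Finset.prod_congr rfl fun j _ => ?_
    push_cast; ring
  rw [hP]
  have h1 : (m + 1) - (i + 1) = m - i := by omega
  rw [h1, pow_succ, Nat.factorial_succ]
  have h2 : (Nat.factorial i : ℝ) ≠ 0 := Nat.cast_ne_zero.mpr (Nat.factorial_ne_zero i)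
  have h3 : ((i : ℝ) + 1) ≠ 0 := by positivity
  push_cast
  field_simp

@[fun_prop] lemma glag_cont (n : ℕ) (k : ℤ) : Continuous (glag n k) :=
  continuous_finset_sum _ fun i _ => continuous_const.mul (continuous_pow i)

@[fun_prop] lemma lag_cont (n : ℕ) : Continuous (lag n) := glag_cont n 0

/-- The integrand of `lagInt`, as a function of `a` (the other variable is `b`). -/
noncomputable def itg (n : ℕ) (k : ℤ) (b θ a : ℝ) : ℂ :=
  (lag n (a ^ 2 + b ^ 2 + 2 * a * b * Real.cos θ) : ℂ) *
    Complex.exp (-(k : ℂ) * Complex.I * θ) *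
    Complex.exp (-(a : ℂ) * b * Complex.exp (Complex.I * θ))

/-- The `a`-derivative of `itg (m+1) k b θ a`. -/
noncomputable def itg' (m : ℕ) (k : ℤ) (b θ a : ℝ) : ℂ :=
  ((-(glag m 1 (a ^ 2 + b ^ 2 + 2 * a * b * Real.cos θ)) * (2 * a + 2 * b * Real.cos θ) : ℝ) : ℂ) *
      Complex.exp (-(k : ℂ) * Complex.I * θ) *
      Complex.exp (-(a : ℂ) * b * Complex.exp (Complex.I * θ)) +
    (lag (m + 1) (a ^ 2 + b ^ 2 + 2 * a * b * Real.cos θ) : ℂ) *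
      Complex.exp (-(k : ℂ) * Complex.I * θ) *
      (Complex.exp (-(a : ℂ) * b * Complex.exp (Complex.I * θ)) *
        (-(b : ℂ) * Complex.exp (Complex.I * θ)))

lemma itg_cont (n : ℕ) (k : ℤ) (b : ℝ) : Continuous fun p : ℝ × ℝ => itg n k b p.2 p.1 := by
  unfold itg; fun_prop

lemma itg'_cont (m : ℕ) (k : ℤ) (b : ℝ) : Continuous fun p : ℝ × ℝ => itg' m k b p.2 p.1 := by
  unfold itg'; fun_prop

lemma itg_cont_theta (n : ℕ) (k : ℤ) (b x : ℝ) : Continuous fun θ => itg n k b θ x := by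
  unfold itg; fun_prop

lemma itg'_cont_theta (m : ℕ) (k : ℤ) (b x : ℝ) : Continuous fun θ => itg' m k b θ x := by
  unfold itg'; fun_prop

lemma itg_comm (n : ℕ) (k : ℤ) (a b θ : ℝ) : itg n k a θ b = itg n k b θ a := by
  unfold itg
  rw [show b ^ 2 + a ^ 2 + 2 * b * a * Real.cos θ
      = a ^ 2 + b ^ 2 + 2 * a * b * Real.cos θ from by ring,
    show -(↑b : ℂ) * ↑a = -(↑a : ℂ) * ↑b from by ring]

lemma itg_hasDerivAt (m : ℕ) (k : ℤ) (b θ a : ℝ) :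
    HasDerivAt (fun x => itg (m + 1) k b θ x) (itg' m k b θ a) a := by
  set u : ℝ → ℝ := fun x => x ^ 2 + b ^ 2 + 2 * x * b * Real.cos θ with hu_def
  have hu : HasDerivAt u (2 * a + 2 * b * Real.cos θ) a := by
    have h : u = fun x : ℝ => (x ^ 2 + (2 * b * Real.cos θ) * x) + b ^ 2 := by
      funext x; simp only [hu_def]; ring
    rw [h]
    have := ((hasDerivAt_pow 2 a).add ((hasDerivAt_id a).const_mul (2 * b * Real.cos θ))).add_const
      (b ^ 2)
    refine this.congr_deriv ?_
    push_cast; ring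
  have hA : HasDerivAt (fun x => ((lag (m + 1) (u x) : ℝ) : ℂ))
      ((-(glag m 1 (u a)) * (2 * a + 2 * b * Real.cos θ) : ℝ) : ℂ) a :=
    (((lag_hasDerivAt m (u a)).comp a hu)).ofReal_comp
  have hE2 : HasDerivAt (fun x : ℝ => Complex.exp (-(x : ℂ) * b * Complex.exp (Complex.I * θ)))
      (Complex.exp (-(a : ℂ) * b * Complex.exp (Complex.I * θ)) *
        (-(b : ℂ) * Complex.exp (Complex.I * θ))) a := by
    have hinner : HasDerivAt (fun x : ℝ => -(x : ℂ) * b * Complex.exp (Complex.I * θ))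
        (-(b : ℂ) * Complex.exp (Complex.I * θ)) a := by
      have h : (fun x : ℝ => -(x : ℂ) * b * Complex.exp (Complex.I * θ))
          = fun x : ℝ => Complex.ofRealCLM x * (-(b : ℂ) * Complex.exp (Complex.I * θ)) := by
        funext x; simp [Complex.ofRealCLM_apply]; ring
      rw [h]
      simpa using (Complex.ofRealCLM.hasDerivAt (x := a)).mul_const
        (-(b : ℂ) * Complex.exp (Complex.I * θ))
    simpa [mul_comm] using hinner.cexp
  have := (hA.mul_const (Complex.exp (-(k : ℂ) * Complex.I * θ))).mul hE2
  exact this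

lemma main_hasDerivAt (m : ℕ) (k : ℤ) (b a : ℝ) :
    HasDerivAt (fun x => ∫ θ in (0:ℝ)..(2 * Real.pi), itg (m + 1) k b θ x)
      (∫ θ in (0:ℝ)..(2 * Real.pi), itg' m k b θ a) a := by
  obtain ⟨C, hC⟩ := (((isCompact_Icc (a := a - 1) (b := a + 1)).prod
      (isCompact_Icc (a := (0:ℝ)) (b := 2 * Real.pi))).exists_bound_of_continuousOn
      ((itg'_cont m k b).continuousOn))
  have key := intervalIntegral.hasDerivAt_integral_of_dominated_loc_of_deriv_le
    (F := fun x θ => itg (m + 1) k b θ x) (F' := fun x θ => itg' m k b θ x)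
    (x₀ := a) (s := Metric.ball a 1) (bound := fun _ => C) (a := (0:ℝ)) (b := 2 * Real.pi)
    (μ := volume) (Metric.ball_mem_nhds a one_pos)
    (Filter.Eventually.of_forall fun x =>
      (itg_cont_theta (m + 1) k b x).aestronglyMeasurable)
    ((itg_cont_theta (m + 1) k b a).intervalIntegrable _ _)
    ((itg'_cont_theta m k b a).aestronglyMeasurable)
    (Filter.Eventually.of_forall fun θ hθ x hx => ?_)
    (intervalIntegrable_const)
    (Filter.Eventually.of_forall fun θ _ x _ => itg_hasDerivAt m k b θ x)
  · exact key.2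
  · have hx' : |x - a| < 1 := by rwa [Metric.mem_ball, Real.dist_eq] at hx
    have habs := abs_lt.mp hx'
    rw [Set.uIoc_of_le (by positivity : (0:ℝ) ≤ 2 * Real.pi)] at hθ
    exact hC (x, θ) ⟨⟨by linarith, by linarith⟩, ⟨le_of_lt hθ.1, hθ.2⟩⟩

lemma combine (m : ℕ) (k : ℤ) (s t θ : ℝ) :
    (s : ℂ) * itg' m k t θ s - (t : ℂ) * itg' m k s θ t =
      (-2 * ((s : ℂ) ^ 2 - (t : ℂ) ^ 2)) *
        ((glag m 1 (s ^ 2 + t ^ 2 + 2 * s * t * Real.cos θ) : ℂ) *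
          Complex.exp (-(k : ℂ) * Complex.I * θ) *
          Complex.exp (-(s : ℂ) * t * Complex.exp (Complex.I * θ))) := by
  unfold itg'
  rw [show t ^ 2 + s ^ 2 + 2 * t * s * Real.cos θ
      = s ^ 2 + t ^ 2 + 2 * s * t * Real.cos θ from by ring,
    show -(↑t : ℂ) * ↑s = -(↑s : ℂ) * ↑t from by ring]
  push_cast
  ring

theorem stmt9 (n : ℕ) (hn : 1 ≤ n) (k : ℤ) (s t : ℝ) (hs : 0 < s) (ht : 0 < t) :
    (s : ℂ) * deriv (fun s' => lagInt n k s' t) s -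
        (t : ℂ) * deriv (fun t' => lagInt n k s t') t =
      -2 * ((s : ℂ) ^ 2 - (t : ℂ) ^ 2) * lagInt1 (n - 1) k s t := by
  obtain ⟨m, rfl⟩ : ∃ m, n = m + 1 := ⟨n - 1, (Nat.succ_pred_eq_of_pos hn).symm⟩
  simp only [Nat.add_sub_cancel]
  set c : ℂ := (1 / (2 * Real.pi) : ℂ) with hc
  have hds : HasDerivAt (fun s' => lagInt (m + 1) k s' t)
      (c * ∫ θ in (0:ℝ)..(2 * Real.pi), itg' m k t θ s) s := by
    have h := (main_hasDerivAt m k t s).const_mul c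
    exact h
  have hdt : HasDerivAt (fun t' => lagInt (m + 1) k s t')
      (c * ∫ θ in (0:ℝ)..(2 * Real.pi), itg' m k s θ t) t := by
    have h := (main_hasDerivAt m k s t).const_mul c
    have heq : (fun t' => lagInt (m + 1) k s t')
        = fun t' => c * ∫ θ in (0:ℝ)..(2 * Real.pi), itg (m + 1) k s θ t' := by
      funext t'
      show c * (∫ θ in (0:ℝ)..(2 * Real.pi), itg (m + 1) k t' θ s) = _
      congr 1
      exact intervalIntegral.integral_congr fun θ _ => itg_comm (m + 1) k t' s θ
    rw [heq]
    exact h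
  rw [hds.deriv, hdt.deriv]
  have hint1 : IntervalIntegrable (fun θ => itg' m k t θ s) volume 0 (2 * Real.pi) :=
    (itg'_cont_theta m k t s).intervalIntegrable _ _
  have hint2 : IntervalIntegrable (fun θ => itg' m k s θ t) volume 0 (2 * Real.pi) :=
    (itg'_cont_theta m k s t).intervalIntegrable _ _
  have step : (s : ℂ) * (c * ∫ θ in (0:ℝ)..(2 * Real.pi), itg' m k t θ s) -
      (t : ℂ) * (c * ∫ θ in (0:ℝ)..(2 * Real.pi), itg' m k s θ t)
      = c * ∫ θ in (0:ℝ)..(2 * Real.pi),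
          ((s : ℂ) * itg' m k t θ s - (t : ℂ) * itg' m k s θ t) := by
    rw [intervalIntegral.integral_sub ((hint1.const_mul _)) ((hint2.const_mul _)),
      intervalIntegral.integral_const_mul, intervalIntegral.integral_const_mul]
    ring
  rw [step]
  have step2 : (∫ θ in (0:ℝ)..(2 * Real.pi),
      ((s : ℂ) * itg' m k t θ s - (t : ℂ) * itg' m k s θ t))
      = (-2 * ((s : ℂ) ^ 2 - (t : ℂ) ^ 2)) *
          ∫ θ in (0:ℝ)..(2 * Real.pi),
            ((glag m 1 (s ^ 2 + t ^ 2 + 2 * s * t * Real.cos θ) : ℂ) *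
              Complex.exp (-(k : ℂ) * Complex.I * θ) *
              Complex.exp (-(s : ℂ) * t * Complex.exp (Complex.I * θ))) := by
    rw [← intervalIntegral.integral_const_mul]
    exact intervalIntegral.integral_congr fun θ _ => combine m k s t θ
  rw [step2]
  show c * (_ * _) = -2 * ((s : ℂ) ^ 2 - (t : ℂ) ^ 2) * (c * _)
  ring
end

section
/- Define I_{n,k}(s,t) = (1/2π) ∫₀^{2π} L_n(s²+t²+2st·cosθ)·e^{-ikθ}·exp(-st·e^{iθ}) dθ. For positive reals s, t, integer n ≥ 0, and any integer k: s·∂I_{n+1,k}/∂s − [2(n+1)+k]·I_{n+1,k}(s,t) = [2t² − 2(n+1) − k]·I_{n,k}(s,t) − t·∂I_{n,k}/∂t. -/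
open Real MeasureTheory intervalIntegral Finset

/-! ## Auxiliary development -/

open Polynomial

noncomputable def lc (n i : ℕ) : ℂ := (-1)^i * (n.choose i : ℂ) / (i.factorial : ℂ)

noncomputable def lagP (n : ℕ) : Polynomial ℂ :=
  ∑ i ∈ Finset.range (n+1), Polynomial.C (lc n i) * Polynomial.X ^ i

lemma fact_ne (i : ℕ) : ((i.factorial : ℂ)) ≠ 0 := by
  exact_mod_cast Nat.cast_ne_zero.mpr (Nat.factorial_ne_zero i)

lemma fact_succ (i : ℕ) : (((i+1).factorial : ℂ)) = ((i:ℂ)+1) * (i.factorial : ℂ) := by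
  rw [Nat.factorial_succ]; push_cast; ring

lemma fact_mul_lc (m i : ℕ) : ((i.factorial:ℂ)) * lc m i = (-1)^i * (m.choose i : ℂ) := by
  rw [lc, mul_div_cancel₀ _ (fact_ne i)]

lemma lc_R1 (n i : ℕ) : ((i:ℂ)+1) * lc (n+1) (i+1) = ((i:ℂ)+1) * lc n (i+1) - lc n i := by
  have h : ((n+1).choose (i+1) : ℂ) = (n.choose i : ℂ) + (n.choose (i+1) : ℂ) := by
    rw [Nat.choose_succ_succ]; push_cast; ring
  apply mul_left_cancel₀ (fact_ne (i+1))
  linear_combination ((i:ℂ)+1) * fact_mul_lc (n+1) (i+1) - ((i:ℂ)+1) * fact_mul_lc n (i+1)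
    + (lc n i) * fact_succ i + ((i:ℂ)+1) * fact_mul_lc n i + ((i:ℂ)+1)*(-1:ℂ)^(i+1) * h

lemma nat_R2 (n j : ℕ) :
    (n+1) * Nat.choose (n+1) (j+1) = (j+1) * Nat.choose n (j+1) + (j+1) * Nat.choose n j + (n+1) * Nat.choose n (j+1) := by
  rw [Nat.choose_succ_succ]
  have h1 : Nat.choose n (j+1) * (j+1) = Nat.choose n j * (n - j) := Nat.choose_succ_right_eq n j
  rcases le_or_gt j n with h | h
  · have h2 : (n - j) + (j + 1) = n + 1 := by omega
    nlinarith [h1, h2]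
  · simp [Nat.choose_eq_zero_of_lt h, Nat.choose_eq_zero_of_lt (by omega : n < j + 1)]

lemma lc_R2 (n j : ℕ) :
    ((j:ℂ)+1) * lc n (j+1) = lc n j - ((n:ℂ)+1) * lc n (j+1) + ((n:ℂ)+1) * lc (n+1) (j+1) := by
  have h : ((n:ℂ)+1) * ((n+1).choose (j+1) : ℂ)
      = ((j:ℂ)+1) * (n.choose (j+1) : ℂ) + ((j:ℂ)+1) * (n.choose j : ℂ) + ((n:ℂ)+1) * (n.choose (j+1) : ℂ) := by
    exact_mod_cast congrArg (fun m : ℕ => (m : ℂ)) (nat_R2 n j)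
  apply mul_left_cancel₀ (fact_ne (j+1))
  linear_combination ((j:ℂ)+(n:ℂ)+2) * fact_mul_lc n (j+1) - ((n:ℂ)+1) * fact_mul_lc (n+1) (j+1)
    - (lc n j) * fact_succ j - ((j:ℂ)+1) * fact_mul_lc n j + (-1:ℂ)^j * h

lemma lc_zero {n i : ℕ} (h : n < i) : lc n i = 0 := by
  simp [lc, Nat.choose_eq_zero_of_lt h]

lemma coeff_lagP (n i : ℕ) : (lagP n).coeff i = lc n i := by
  rcases lt_or_ge i (n+1) with h | h
  · simp [lagP, Polynomial.coeff_C_mul, Polynomial.coeff_X_pow, Finset.sum_ite_eq',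
      Finset.mem_range.mpr h]
  · rw [lagP, Polynomial.finset_sum_coeff, Finset.sum_eq_zero, lc_zero (by omega)]
    intro j hj
    simp only [Polynomial.coeff_C_mul, Polynomial.coeff_X_pow]
    have : j ≠ i := by simp at hj; omega
    simp [this.symm]

lemma lagP_R1 : ∀ n : ℕ, derivative (lagP (n+1)) = derivative (lagP n) - lagP n := by
  intro n
  ext i
  simp only [Polynomial.coeff_derivative, Polynomial.coeff_sub, coeff_lagP]
  linear_combination lc_R1 n i

lemma lagP_R2 (n : ℕ) : X * derivative (lagP n)
    = (X - Polynomial.C ((n:ℂ)+1)) * lagP n + Polynomial.C ((n:ℂ)+1) * lagP (n+1) := by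
  ext i
  cases i with
  | zero =>
      simp [Polynomial.mul_coeff_zero, Polynomial.coeff_sub, coeff_lagP, lc]
  | succ j =>
      simp only [Polynomial.coeff_X_mul, Polynomial.coeff_derivative, Polynomial.coeff_add,
        Polynomial.coeff_C_mul, sub_mul, Polynomial.coeff_sub, Polynomial.coeff_X_mul,
        coeff_lagP]
      linear_combination lc_R2 n j

lemma prod_Ico_fact (i m : ℕ) (h : i ≤ m) :
    i.factorial * ∏ j ∈ Finset.Ico i m, (j+1) = m.factorial := by
  induction m, h using Nat.le_induction with
  | base => simp
  | succ m hm ih =>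
      rw [Finset.prod_Ico_succ_top hm, ← mul_assoc, ih, Nat.factorial_succ, mul_comm]

lemma lag_cast (m : ℕ) (x : ℝ) : ((lag m x : ℝ) : ℂ) = (lagP m).eval (x:ℂ) := by
  rw [lag, glag, lagP, Polynomial.eval_finset_sum]
  push_cast
  refine Finset.sum_congr rfl fun i hi => ?_
  have hi' : i ≤ m := by simpa using Nat.lt_succ_iff.mp (Finset.mem_range.mp hi)
  simp only [Polynomial.eval_mul, Polynomial.eval_C, Polynomial.eval_pow, Polynomial.eval_X]
  congr 1
  have hprod : (i.factorial : ℂ) * ∏ j ∈ Finset.Ico i m, ((j:ℂ)+1) = (m.factorial : ℂ) := by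
    exact_mod_cast congrArg (fun a : ℕ => (a:ℂ)) (prod_Ico_fact i m hi')
  have hch : (m.choose i : ℂ) * i.factorial * (m-i).factorial = m.factorial := by
    exact_mod_cast congrArg (fun a : ℕ => (a:ℂ)) (Nat.choose_mul_factorial_mul_factorial hi')
  have h0 : (∏ j ∈ Finset.Ico i m, ((0:ℂ) + j + 1)) = ∏ j ∈ Finset.Ico i m, ((j:ℂ)+1) := by
    refine Finset.prod_congr rfl fun j _ => by ring
  rw [lc, h0]
  field_simp [fact_ne]
  rw [div_eq_div_iff (mul_ne_zero (fact_ne _) (fact_ne _)) (fact_ne _)]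
  linear_combination hprod - hch

/-! ### Analytic part -/

noncomputable def Ac (z w ζ : ℂ) : ℂ := z^2 + w^2 + 2*z*w*Complex.cos ζ
noncomputable def E1 (k : ℤ) (ζ : ℂ) : ℂ := Complex.exp (-(k:ℂ) * Complex.I * ζ)
noncomputable def E2 (z w ζ : ℂ) : ℂ := Complex.exp (-z * w * Complex.exp (Complex.I * ζ))
noncomputable def Phi (m : ℕ) (k : ℤ) (z w ζ : ℂ) : ℂ :=
  (lagP m).eval (Ac z w ζ) * E1 k ζ * E2 z w ζ
noncomputable def Phiz (m : ℕ) (k : ℤ) (z w ζ : ℂ) : ℂ :=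
  ((2*z + 2*w*Complex.cos ζ) * (derivative (lagP m)).eval (Ac z w ζ)) * E1 k ζ * E2 z w ζ
    + (lagP m).eval (Ac z w ζ) * E1 k ζ * ((-w * Complex.exp (Complex.I*ζ)) * E2 z w ζ)

noncomputable def Gf (n : ℕ) (k : ℤ) (z w ζ : ℂ) : ℂ :=
  Complex.I * (E1 k ζ * E2 z w ζ *
    ((lagP n).eval (Ac z w ζ) - (lagP (n+1)).eval (Ac z w ζ)))

noncomputable def Gd (n : ℕ) (k : ℤ) (z w ζ : ℂ) : ℂ :=
  Complex.I * ((-(k:ℂ)*Complex.I) * E1 k ζ * E2 z w ζ *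
      ((lagP n).eval (Ac z w ζ) - (lagP (n+1)).eval (Ac z w ζ))
    + E1 k ζ * ((-(z*w) * (Complex.I * Complex.exp (Complex.I*ζ))) * E2 z w ζ) *
      ((lagP n).eval (Ac z w ζ) - (lagP (n+1)).eval (Ac z w ζ))
    + E1 k ζ * E2 z w ζ *
      (((derivative (lagP n)).eval (Ac z w ζ) - (derivative (lagP (n+1))).eval (Ac z w ζ)) *
        (2*z*w*(-Complex.sin ζ))))

lemma hasDerivAt_Ac_z (z w ζ : ℂ) :
    HasDerivAt (fun z => Ac z w ζ) (2*z + 2*w*Complex.cos ζ) z := by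
  have h1 := ((hasDerivAt_pow 2 z).add_const (w^2)).add
    ((hasDerivAt_id z).const_mul (2*w*Complex.cos ζ))
  have heq : (fun z : ℂ => Ac z w ζ) =ᶠ[nhds z]
      (fun z : ℂ => z^2 + w^2 + (2*w*Complex.cos ζ) * z) :=
    Filter.Eventually.of_forall (fun y => by simp [Ac]; ring)
  have h2 := h1.congr_of_eventuallyEq heq
  refine h2.congr_deriv ?_
  simp

lemma hasDerivAt_E2_z (z w ζ : ℂ) :
    HasDerivAt (fun z => E2 z w ζ) ((-w * Complex.exp (Complex.I*ζ)) * E2 z w ζ) z := by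
  have hinner : HasDerivAt (fun z : ℂ => -z * w * Complex.exp (Complex.I*ζ))
      (-w * Complex.exp (Complex.I*ζ)) z := by
    have := (hasDerivAt_id z).neg.mul_const w
    have := this.mul_const (Complex.exp (Complex.I*ζ))
    refine this.congr_deriv ?_; ring
  have := (Complex.hasDerivAt_exp (-z * w * Complex.exp (Complex.I*ζ))).comp z hinner
  refine this.congr_deriv ?_
  simp [E2]; ring

lemma hasDerivAt_Phi_z (m : ℕ) (k : ℤ) (z w ζ : ℂ) :
    HasDerivAt (fun z => Phi m k z w ζ) (Phiz m k z w ζ) z := by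
  have hA := hasDerivAt_Ac_z z w ζ
  have hP : HasDerivAt (fun z => (lagP m).eval (Ac z w ζ))
      ((derivative (lagP m)).eval (Ac z w ζ) * (2*z + 2*w*Complex.cos ζ)) z :=
    by have := (Polynomial.hasDerivAt (lagP m) (Ac z w ζ)).comp z hA; exact this
  have h1 : HasDerivAt (fun z => (lagP m).eval (Ac z w ζ) * E1 k ζ)
      ((derivative (lagP m)).eval (Ac z w ζ) * (2*z + 2*w*Complex.cos ζ) * E1 k ζ) z := by
    simpa using hP.mul_const (E1 k ζ)
  have h2 := h1.mul (hasDerivAt_E2_z z w ζ)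
  refine h2.congr_deriv ?_
  simp only [Phiz]; ring

lemma hasDerivAt_Ac_zeta (z w ζ : ℂ) :
    HasDerivAt (fun ζ => Ac z w ζ) (2*z*w*(-Complex.sin ζ)) ζ := by
  have h1 := ((Complex.hasDerivAt_cos ζ).const_mul (2*z*w)).const_add (z^2+w^2)
  have heq : (fun ζ : ℂ => Ac z w ζ) =ᶠ[nhds ζ]
      (fun ζ : ℂ => z^2+w^2 + (2*z*w) * Complex.cos ζ) :=
    Filter.Eventually.of_forall (fun y => by simp [Ac])
  exact h1.congr_of_eventuallyEq heq

lemma hasDerivAt_E1 (k : ℤ) (ζ : ℂ) :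
    HasDerivAt (fun ζ => E1 k ζ) ((-(k:ℂ)*Complex.I) * E1 k ζ) ζ := by
  have hinner : HasDerivAt (fun ζ : ℂ => -(k:ℂ)*Complex.I*ζ) (-(k:ℂ)*Complex.I) ζ := by
    simpa using (hasDerivAt_id ζ).const_mul (-(k:ℂ)*Complex.I)
  have := (Complex.hasDerivAt_exp (-(k:ℂ)*Complex.I*ζ)).comp ζ hinner
  refine this.congr_deriv ?_
  simp only [E1]
  ring

lemma hasDerivAt_expI (ζ : ℂ) :
    HasDerivAt (fun ζ : ℂ => Complex.exp (Complex.I*ζ))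
      (Complex.I * Complex.exp (Complex.I*ζ)) ζ := by
  have hinner : HasDerivAt (fun ζ : ℂ => Complex.I*ζ) Complex.I ζ := by
    simpa using (hasDerivAt_id ζ).const_mul Complex.I
  have := (Complex.hasDerivAt_exp (Complex.I*ζ)).comp ζ hinner
  have h2 : HasDerivAt (fun ζ : ℂ => Complex.exp (Complex.I*ζ))
      (Complex.exp (Complex.I * ζ) * Complex.I) ζ := this
  convert h2 using 1
  ring

lemma hasDerivAt_E2_zeta (z w ζ : ℂ) :
    HasDerivAt (fun ζ => E2 z w ζ)
      ((-(z*w) * (Complex.I * Complex.exp (Complex.I*ζ))) * E2 z w ζ) ζ := by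
  have hinner : HasDerivAt (fun ζ : ℂ => -z*w*Complex.exp (Complex.I*ζ))
      (-(z*w) * (Complex.I * Complex.exp (Complex.I*ζ))) ζ := by
    have := (hasDerivAt_expI ζ).const_mul (-z*w)
    have heq : (fun ζ : ℂ => -z*w*Complex.exp (Complex.I*ζ)) =ᶠ[nhds ζ]
        (fun ζ : ℂ => (-z*w) * Complex.exp (Complex.I*ζ)) :=
      Filter.Eventually.of_forall (fun y => by ring)
    have h2 := this.congr_of_eventuallyEq heq
    refine h2.congr_deriv ?_
    ring
  have := (Complex.hasDerivAt_exp (-z*w*Complex.exp (Complex.I*ζ))).comp ζ hinner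
  refine this.congr_deriv ?_
  simp [E2]; ring

lemma hasDerivAt_Gf (n : ℕ) (k : ℤ) (z w ζ : ℂ) :
    HasDerivAt (fun ζ => Gf n k z w ζ) (Gd n k z w ζ) ζ := by
  have hAc := hasDerivAt_Ac_zeta z w ζ
  have hPn : HasDerivAt (fun ζ => (lagP n).eval (Ac z w ζ))
      ((derivative (lagP n)).eval (Ac z w ζ) * (2*z*w*(-Complex.sin ζ))) ζ :=
    (Polynomial.hasDerivAt (lagP n) _).comp ζ hAc
  have hPn1 : HasDerivAt (fun ζ => (lagP (n+1)).eval (Ac z w ζ))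
      ((derivative (lagP (n+1))).eval (Ac z w ζ) * (2*z*w*(-Complex.sin ζ))) ζ :=
    (Polynomial.hasDerivAt (lagP (n+1)) _).comp ζ hAc
  have hΔ := hPn.sub hPn1
  have hE := (hasDerivAt_E1 k ζ).mul (hasDerivAt_E2_zeta z w ζ)
  have h := (hE.mul hΔ).const_mul Complex.I
  refine h.congr_deriv ?_
  simp only [Gd, Pi.mul_apply, Pi.sub_apply]; ring

lemma key_identity (n : ℕ) (k : ℤ) (z w : ℂ) (ζ : ℂ) :
    z * Phiz (n+1) k z w ζ + w * Phiz n k w z ζ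
      - (2*((n:ℂ)+1)+(k:ℂ)) * Phi (n+1) k z w ζ
      - (2*w^2-2*((n:ℂ)+1)-(k:ℂ)) * Phi n k z w ζ = Gd n k z w ζ := by
  have hAsymm : Ac w z ζ = Ac z w ζ := by simp [Ac]; ring
  have hE2symm : E2 w z ζ = E2 z w ζ := by rw [E2, E2]; ring_nf
  set x := z^2+w^2+2*z*w*Complex.cos ζ with hx
  have hxA : Ac z w ζ = x := rfl
  have hR1 : derivative (lagP (n+1)) = derivative (lagP n) - lagP n := lagP_R1 n
  have hR1x : (derivative (lagP (n+1))).eval x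
      = (derivative (lagP n)).eval x - (lagP n).eval x := by rw [hR1]; simp
  have hR2x : x * (derivative (lagP n)).eval x
      = (x - ((n:ℂ)+1)) * (lagP n).eval x + ((n:ℂ)+1) * (lagP (n+1)).eval x := by
    have := congrArg (Polynomial.eval x) (lagP_R2 n)
    simpa using this
  have hu : Complex.exp (Complex.I * ζ) = Complex.cos ζ + Complex.sin ζ * Complex.I := by
    rw [mul_comm, Complex.exp_mul_I]
  simp only [Phiz, Phi, Gd, hAsymm, hE2symm, hxA, hu, hx]
  linear_combination (2 * E1 k ζ * E2 z w ζ) * hR2x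
    + ((z*(2*z+2*w*Complex.cos ζ) - 2*Complex.I*z*w*Complex.sin ζ) * E1 k ζ * E2 z w ζ) * hR1x
    + (E1 k ζ * E2 z w ζ * ((lagP n).eval x - (lagP (n+1)).eval x)
        * (z*w*Complex.cos ζ + z*w*Complex.sin ζ*Complex.I + (k:ℂ))) * Complex.I_sq

/-! ### Continuity and integral lemmas -/

lemma Phi_symm (m : ℕ) (k : ℤ) (z w ζ : ℂ) : Phi m k z w ζ = Phi m k w z ζ := by
  have hAsymm : Ac w z ζ = Ac z w ζ := by simp [Ac]; ring
  have hE2symm : E2 w z ζ = E2 z w ζ := by rw [E2, E2]; ring_nf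
  rw [Phi, Phi, hAsymm, hE2symm]

lemma contPhi (m : ℕ) (k : ℤ) (x y : ℝ) : Continuous fun θ : ℝ => Phi m k ↑x ↑y ↑θ := by
  unfold Phi Ac E1 E2; fun_prop

lemma contPhiz (m : ℕ) (k : ℤ) (x y : ℝ) : Continuous fun θ : ℝ => Phiz m k ↑x ↑y ↑θ := by
  unfold Phiz Ac E1 E2; fun_prop

lemma contPhiz2 (m : ℕ) (k : ℤ) (y : ℝ) :
    Continuous fun p : ℝ × ℝ => Phiz m k ↑p.1 ↑y ↑p.2 := by
  unfold Phiz Ac E1 E2; fun_prop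

lemma contGd (n : ℕ) (k : ℤ) (x y : ℝ) : Continuous fun θ : ℝ => Gd n k ↑x ↑y ↑θ := by
  unfold Gd Ac E1 E2; fun_prop

lemma lagInt_eq_s12 (m : ℕ) (k : ℤ) (s t : ℝ) :
    lagInt m k s t = (1 / (2 * (Real.pi:ℂ))) * ∫ θ in (0:ℝ)..(2*Real.pi), Phi m k ↑s ↑t ↑θ := by
  rw [lagInt]
  congr 1
  apply intervalIntegral.integral_congr
  intro θ _
  have harg : ((s^2 + t^2 + 2*s*t*Real.cos θ : ℝ) : ℂ)
      = (s:ℂ)^2 + (t:ℂ)^2 + 2*(s:ℂ)*(t:ℂ)*Complex.cos (θ:ℂ) := by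
    push_cast [Complex.ofReal_cos]; ring
  show (lag m (s^2 + t^2 + 2*s*t*Real.cos θ) : ℂ) * _ * _ = _
  rw [lag_cast, harg]
  rfl

lemma intGd_zero (n : ℕ) (k : ℤ) (s t : ℝ) :
    ∫ θ in (0:ℝ)..(2*Real.pi), Gd n k ↑s ↑t ↑θ = 0 := by
  have h : ∀ θ ∈ Set.uIcc (0:ℝ) (2*Real.pi),
      HasDerivAt (fun θ : ℝ => Gf n k ↑s ↑t ↑θ) (Gd n k ↑s ↑t ↑θ) θ :=
    fun θ _ => (hasDerivAt_Gf n k ↑s ↑t ↑θ).comp_ofReal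
  rw [intervalIntegral.integral_eq_sub_of_hasDerivAt h
    ((contGd n k s t).intervalIntegrable _ _)]
  have e1 : Complex.cos ((2*Real.pi : ℝ) : ℂ) = Complex.cos ((0:ℝ) : ℂ) := by
    rw [← Complex.ofReal_cos, ← Complex.ofReal_cos, Real.cos_two_pi, Real.cos_zero]
  have e2 : E1 k ((2*Real.pi : ℝ) : ℂ) = E1 k ((0:ℝ) : ℂ) := by
    rw [E1, E1, show -(k:ℂ)*Complex.I*((2*Real.pi : ℝ) : ℂ)
        = ((-k : ℤ):ℂ)*(2*(Real.pi:ℂ)*Complex.I) by push_cast; ring,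
      Complex.exp_int_mul_two_pi_mul_I]
    norm_num
  have e3 : Complex.exp (Complex.I*((2*Real.pi : ℝ) : ℂ)) = Complex.exp (Complex.I*((0:ℝ) : ℂ)) := by
    rw [show Complex.I*((2*Real.pi : ℝ) : ℂ) = 2*(Real.pi:ℂ)*Complex.I by push_cast; ring,
      Complex.exp_two_pi_mul_I]
    norm_num
  rw [Gf, Gf, Ac, Ac, E2, E2, e1, e2, e3, sub_self]

lemma hasDerivAt_int (m : ℕ) (k : ℤ) (s t : ℝ) :
    HasDerivAt (fun x : ℝ => ∫ θ in (0:ℝ)..(2*Real.pi), Phi m k ↑x ↑t ↑θ)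
      (∫ θ in (0:ℝ)..(2*Real.pi), Phiz m k ↑s ↑t ↑θ) s := by
  obtain ⟨C, hC⟩ := ((isCompact_closedBall s 1).prod isCompact_uIcc).exists_bound_of_continuousOn
    (contPhiz2 m k t).continuousOn
  refine (intervalIntegral.hasDerivAt_integral_of_dominated_loc_of_deriv_le
    (F := fun (x : ℝ) (θ : ℝ) => Phi m k ↑x ↑t ↑θ) (F' := fun (x : ℝ) (θ : ℝ) => Phiz m k ↑x ↑t ↑θ)
    (bound := fun _ => C) (Metric.ball_mem_nhds s one_pos) ?_ ?_ ?_ ?_ ?_ ?_).2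
  · exact Filter.Eventually.of_forall fun x => (contPhi m k x t).aestronglyMeasurable
  · exact (contPhi m k s t).intervalIntegrable _ _
  · exact (contPhiz m k s t).aestronglyMeasurable
  · refine Filter.Eventually.of_forall fun θ hθ x hx => ?_
    exact hC (x, θ) ⟨Metric.ball_subset_closedBall hx, Set.uIoc_subset_uIcc hθ⟩
  · exact intervalIntegrable_const
  · exact Filter.Eventually.of_forall fun θ hθ x hx =>
      (hasDerivAt_Phi_z m k ↑x ↑t ↑θ).comp_ofReal

theorem stmt12 (n : ℕ) (k : ℤ) (s t : ℝ) (hs : 0 < s) (ht : 0 < t) :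
    (s : ℂ) * deriv (fun s' => lagInt (n + 1) k s' t) s -
        (2 * ((n : ℂ) + 1) + (k : ℂ)) * lagInt (n + 1) k s t =
      (2 * (t : ℂ) ^ 2 - 2 * ((n : ℂ) + 1) - (k : ℂ)) * lagInt n k s t -
        (t : ℂ) * deriv (fun t' => lagInt n k s t') t := by
  set c : ℂ := 1 / (2 * (Real.pi:ℂ)) with hc
  have hd1 : deriv (fun s' => lagInt (n+1) k s' t) s
      = c * ∫ θ in (0:ℝ)..(2*Real.pi), Phiz (n+1) k ↑s ↑t ↑θ := by
    have hfun : (fun s' => lagInt (n+1) k s' t)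
        = fun s' : ℝ => c * ∫ θ in (0:ℝ)..(2*Real.pi), Phi (n+1) k ↑s' ↑t ↑θ :=
      funext fun s' => lagInt_eq_s12 (n+1) k s' t
    rw [hfun]
    exact ((hasDerivAt_int (n+1) k s t).const_mul c).deriv
  have hd2 : deriv (fun t' => lagInt n k s t') t
      = c * ∫ θ in (0:ℝ)..(2*Real.pi), Phiz n k ↑t ↑s ↑θ := by
    have hfun : (fun t' => lagInt n k s t')
        = fun t' : ℝ => c * ∫ θ in (0:ℝ)..(2*Real.pi), Phi n k ↑t' ↑s ↑θ := by
      funext t'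
      rw [lagInt_eq_s12 n k s t']
      congr 1
      exact intervalIntegral.integral_congr fun θ _ => Phi_symm n k ↑s ↑t' ↑θ
    rw [hfun]
    exact ((hasDerivAt_int n k t s).const_mul c).deriv
  have hint1 : IntervalIntegrable (fun θ : ℝ => (s:ℂ) * Phiz (n+1) k ↑s ↑t ↑θ)
      volume 0 (2*Real.pi) := (continuous_const.mul (contPhiz (n+1) k s t)).intervalIntegrable _ _
  have hint2 : IntervalIntegrable (fun θ : ℝ => (t:ℂ) * Phiz n k ↑t ↑s ↑θ)
      volume 0 (2*Real.pi) := (continuous_const.mul (contPhiz n k t s)).intervalIntegrable _ _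
  have hint3 : IntervalIntegrable (fun θ : ℝ => (2*((n:ℂ)+1)+(k:ℂ)) * Phi (n+1) k ↑s ↑t ↑θ)
      volume 0 (2*Real.pi) := (continuous_const.mul (contPhi (n+1) k s t)).intervalIntegrable _ _
  have hint4 : IntervalIntegrable (fun θ : ℝ => (2*(t:ℂ)^2-2*((n:ℂ)+1)-(k:ℂ)) * Phi n k ↑s ↑t ↑θ)
      volume 0 (2*Real.pi) := (continuous_const.mul (contPhi n k s t)).intervalIntegrable _ _
  have hzero : (s:ℂ) * (∫ θ in (0:ℝ)..(2*Real.pi), Phiz (n+1) k ↑s ↑t ↑θ)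
      + (t:ℂ) * (∫ θ in (0:ℝ)..(2*Real.pi), Phiz n k ↑t ↑s ↑θ)
      - (2*((n:ℂ)+1)+(k:ℂ)) * (∫ θ in (0:ℝ)..(2*Real.pi), Phi (n+1) k ↑s ↑t ↑θ)
      - (2*(t:ℂ)^2-2*((n:ℂ)+1)-(k:ℂ)) * (∫ θ in (0:ℝ)..(2*Real.pi), Phi n k ↑s ↑t ↑θ) = 0 := by
    rw [← intervalIntegral.integral_const_mul, ← intervalIntegral.integral_const_mul,
      ← intervalIntegral.integral_const_mul, ← intervalIntegral.integral_const_mul,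
      ← intervalIntegral.integral_add hint1 hint2,
      ← intervalIntegral.integral_sub (hint1.add hint2) hint3,
      ← intervalIntegral.integral_sub ((hint1.add hint2).sub hint3) hint4]
    rw [intervalIntegral.integral_congr
      (g := fun θ : ℝ => Gd n k ↑s ↑t ↑θ) fun θ _ => key_identity n k ↑s ↑t ↑θ]
    exact intGd_zero n k s t
  rw [hd1, hd2, lagInt_eq_s12 (n+1) k s t, lagInt_eq_s12 n k s t]
  rw [← hc]
  linear_combination c * hzero
end

section
/- (Bateman's addition formula) For real numbers x, y, real θ, and integer n ≥ 0: exp(xy·e^{iθ})·L_n(x²+y²−2xy·cosθ) = Σ_{j=0}^∞ (xy·e^{iθ})^{j−n}·(n!/j!)·L_n^{j−n}(x²)·L_n^{j−n}(y²), provided xy ≠ 0 (or interpreting negative powers appropriately; note the sum is finite in negative powers since L_n^{j-n} vanishes appropriately, and terms with j−n < 0 involve (xy·e^{iθ})^{j−n} as a complex power). -/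
open Real MeasureTheory intervalIntegral Finset

/-! ### Auxiliary lemmas for Bateman's addition formula -/

section BatemanAux

open Finset

lemma descCast' (j k : ℕ) :
    ((j.descFactorial k : ℂ)) = ∏ r ∈ range k, ((j : ℂ) - r) := by
  induction k with
  | zero => simp
  | succ k ih =>
    rw [Nat.descFactorial_succ, Finset.prod_range_succ, ← ih]
    by_cases h : k < j
    · push_cast [Nat.cast_sub h.le]
      ring
    · push_neg at h
      rcases Nat.lt_or_ge j k with hlt | hge
    
      · have : j.descFactorial k = 0 := Nat.descFactorial_eq_zero_iff_lt.mpr hlt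
        simp [Nat.sub_eq_zero_of_le h, this]
      · have hjk : j = k := le_antisymm h hge
        subst hjk
        simp [Nat.sub_eq_zero_of_le h]

lemma descB' (j p q : ℕ) :
    (j.descFactorial p) * (j.descFactorial q)
      = ∑ s ∈ range (q + 1),
          p.choose s * q.choose s * s.factorial * j.descFactorial (p + q - s) := by
  by_cases hjp : j < p
  · rw [Nat.descFactorial_eq_zero_iff_lt.mpr hjp, Nat.zero_mul]
    refine (Finset.sum_eq_zero fun s hs => ?_).symm
    rw [mem_range] at hs
    have : j < p + q - s := by omega
    rw [Nat.descFactorial_eq_zero_iff_lt.mpr this, Nat.mul_zero]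
  · push_neg at hjp
    have hj : j = p + (j - p) := by omega
    have hvdm : j.choose q = ∑ s ∈ range (q+1), p.choose s * (j - p).choose (q - s) := by
      conv_lhs => rw [hj]
      rw [Nat.add_choose_eq]
      rw [Finset.Nat.sum_antidiagonal_eq_sum_range_succ (fun a b => p.choose a * (j-p).choose b)]
    calc j.descFactorial p * j.descFactorial q
        = j.descFactorial p * (q.factorial * j.choose q) := by
          rw [Nat.descFactorial_eq_factorial_mul_choose j q]
      _ = ∑ s ∈ range (q+1),
            j.descFactorial p * (q.factorial * (p.choose s * (j-p).choose (q-s))) := by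
          rw [hvdm, Finset.mul_sum]; simp_rw [Finset.mul_sum]
      _ = _ := by
          refine Finset.sum_congr rfl fun s hs => ?_
          rw [mem_range] at hs
          have hsq : s ≤ q := by omega
          have h1 : p + q - s = p + (q - s) := by omega
          rw [h1, ← Nat.descFactorial_mul_descFactorial (show p ≤ p + (q-s) by omega)]
          have h2 : p + (q - s) - p = q - s := by omega
          rw [h2]
          have h3 : (j - p).descFactorial (q - s) = (q-s).factorial * (j-p).choose (q-s) :=
            Nat.descFactorial_eq_factorial_mul_choose _ _
          rw [h3]
          have h4 : q.choose s * s.factorial * (q - s).factorial = q.factorial := by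
            rw [← Nat.choose_mul_factorial_mul_factorial hsq]
          calc j.descFactorial p * (q.factorial * (p.choose s * (j - p).choose (q - s)))
              = (q.choose s * s.factorial * (q-s).factorial) *
                  (p.choose s * ((j-p).choose (q-s) * j.descFactorial p)) := by rw [h4]; ring
            _ = p.choose s * q.choose s * s.factorial *
                  ((q - s).factorial * (j - p).choose (q - s) * j.descFactorial p) := by ring
            _ = _ := by ring_nf

lemma prodIco' (j n a : ℕ) (ha : a ≤ n) :
    (∏ t ∈ Finset.Ico a n, ((j : ℂ) - n + t + 1)) = (j.descFactorial (n - a) : ℂ) := by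
  rw [Finset.prod_Ico_eq_prod_range, descCast']
  rw [← Finset.prod_range_reflect (fun r => (j : ℂ) - r) (n - a)]
  refine Finset.prod_congr rfl fun r hr => ?_
  rw [mem_range] at hr
  have h1 : ((n - a - 1 - r : ℕ) : ℂ) = (n : ℂ) - a - 1 - r := by
    have : ((n - a - 1 - r : ℕ) : ℤ) = (n : ℤ) - a - 1 - r := by omega
    calc ((n - a - 1 - r : ℕ) : ℂ) = (((n - a - 1 - r : ℕ) : ℤ) : ℂ) := by push_cast; ring
      _ = (n : ℂ) - a - 1 - r := by rw [this]; push_cast; ring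
  rw [h1]; push_cast; ring

lemma glagC_expand' (n j : ℕ) (w : ℂ) :
    glagC n ((j : ℤ) - n) w
      = ∑ a ∈ range (n + 1),
          (-1 : ℂ) ^ a * (j.descFactorial (n - a) : ℂ)
            / (a.factorial * (n - a).factorial) * w ^ a := by
  unfold glagC
  refine Finset.sum_congr rfl fun a ha => ?_
  rw [mem_range] at ha
  have h := prodIco' j n a (by omega)
  have hc : ∀ t : ℕ, (((j : ℤ) - n : ℤ) : ℂ) + t + 1 = (j : ℂ) - n + t + 1 := by
    intro t; push_cast; ring
  simp_rw [hc]
  rw [h]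
  ring

lemma sum_range_reflect'' {M : Type*} [AddCommMonoid M] (f : ℕ → M) (n : ℕ) :
    ∑ k ∈ range (n+1), f k = ∑ k ∈ range (n+1), f (n - k) := by
  have := Finset.sum_range_reflect f (n+1)
  simpa using this.symm

set_option maxHeartbeats 1000000 in
lemma Fkey' (n j : ℕ) (w v : ℂ) :
    (n.factorial : ℂ) * glagC n ((j:ℤ) - n) w * glagC n ((j:ℤ) - n) v
      = ∑ i ∈ range (n+1), ∑ c ∈ range (i+1), ∑ d ∈ range (i+1),
          (n.choose i : ℂ) / (i.factorial) * (i.choose c) * (i.choose d) *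
            (-w)^(i-c) * (-v)^(i-d) * (j.descFactorial (c + d + (n - i)) : ℂ) := by
  have descBC : ∀ p q : ℕ, ((j.descFactorial p : ℂ)) * (j.descFactorial q)
      = ∑ s ∈ range (q + 1),
          (p.choose s : ℂ) * (q.choose s) * (s.factorial) *
            (j.descFactorial (p + q - s) : ℂ) := by
    intro p q
    exact_mod_cast congrArg (fun m : ℕ => (m : ℂ)) (descB' j p q)
  set A : ℕ → ℕ → ℕ → ℂ := fun s a b =>
    (n.factorial : ℂ) * (-1:ℂ)^(a+b) * w^a * v^b * ((n-a).choose s) * ((n-b).choose s) *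
      (s.factorial) * (j.descFactorial ((n-a) + (n-b) - s) : ℂ) /
      (a.factorial * (n-a).factorial * b.factorial * (n-b).factorial) with hA
  have hL : (n.factorial : ℂ) * glagC n ((j:ℤ) - n) w * glagC n ((j:ℤ) - n) v
      = ∑ s ∈ range (n+1), ∑ a ∈ range (n-s+1), ∑ b ∈ range (n-s+1), A s a b := by
    rw [glagC_expand' n j w, glagC_expand' n j v]
    rw [mul_assoc, Finset.sum_mul_sum, Finset.mul_sum]
    have step1 : ∀ a ∈ range (n+1),
        (n.factorial : ℂ) * (∑ b ∈ range (n+1),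
          ((-1:ℂ)^a * (j.descFactorial (n-a) : ℂ)
            / (a.factorial * (n-a).factorial) * w^a) *
          ((-1:ℂ)^b * (j.descFactorial (n-b) : ℂ)
            / (b.factorial * (n-b).factorial) * v^b))
        = ∑ b ∈ range (n+1), ∑ s ∈ range (n+1), A s a b := by
      intro a ha
      rw [Finset.mul_sum]
      refine Finset.sum_congr rfl fun b hb => ?_
      rw [mem_range] at ha hb
      have key : (n.factorial : ℂ) * (((-1:ℂ)^a * (j.descFactorial (n-a) : ℂ)
            / (a.factorial * (n-a).factorial) * w^a) *
          ((-1:ℂ)^b * (j.descFactorial (n-b) : ℂ)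
            / (b.factorial * (n-b).factorial) * v^b))
          = ∑ s ∈ range ((n-b) + 1), A s a b := by
        have expand := descBC (n-a) (n-b)
        calc (n.factorial : ℂ) * (((-1:ℂ)^a * (j.descFactorial (n-a) : ℂ)
              / (a.factorial * (n-a).factorial) * w^a) *
            ((-1:ℂ)^b * (j.descFactorial (n-b) : ℂ)
              / (b.factorial * (n-b).factorial) * v^b))
            = (n.factorial : ℂ) * (-1:ℂ)^(a+b) * w^a * v^b /
                (a.factorial * (n-a).factorial * b.factorial * (n-b).factorial) *
                ((j.descFactorial (n-a) : ℂ) * (j.descFactorial (n-b) : ℂ)) := by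
              rw [pow_add]; ring
          _ = ∑ s ∈ range ((n-b) + 1),
                (n.factorial : ℂ) * (-1:ℂ)^(a+b) * w^a * v^b /
                (a.factorial * (n-a).factorial * b.factorial * (n-b).factorial) *
                ((((n-a).choose s : ℂ)) * ((n-b).choose s) * (s.factorial) *
                  (j.descFactorial ((n-a) + (n-b) - s) : ℂ)) := by
              rw [expand, Finset.mul_sum]
          _ = _ := by
              refine Finset.sum_congr rfl fun s hs => ?_
              rw [hA]; ring
      rw [key]
      refine (Finset.sum_subset ?_ ?_)
      · intro s hs; rw [mem_range] at hs ⊢; omega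
      · intro s hs hns
        rw [mem_range] at hs hns
        have : (n-b).choose s = 0 := Nat.choose_eq_zero_of_lt (by omega)
        rw [hA]
        simp [this]
    rw [Finset.sum_congr rfl step1]
    have step2 : (∑ a ∈ range (n+1), ∑ b ∈ range (n+1), ∑ s ∈ range (n+1), A s a b)
        = ∑ s ∈ range (n+1), ∑ a ∈ range (n+1), ∑ b ∈ range (n+1), A s a b := by
      rw [Finset.sum_congr rfl (fun a _ => Finset.sum_comm)]
      exact Finset.sum_comm
    rw [step2]
    refine Finset.sum_congr rfl fun s hs => ?_
    rw [mem_range] at hs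
    have h1 : ∀ a ∈ range (n-s+1),
        (∑ b ∈ range (n-s+1), A s a b) = ∑ b ∈ range (n+1), A s a b := by
      intro a ha
      refine Finset.sum_subset ?_ ?_
      · intro b hb; rw [mem_range] at hb ⊢; omega
      · intro b hb hnb
        rw [mem_range] at hb hnb
        have hz : (n-b).choose s = 0 := Nat.choose_eq_zero_of_lt (by omega)
        rw [hA]; simp [hz]
    have h2 : (∑ a ∈ range (n-s+1), ∑ b ∈ range (n+1), A s a b)
        = ∑ a ∈ range (n+1), ∑ b ∈ range (n+1), A s a b := by
      refine Finset.sum_subset ?_ ?_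
      · intro a ha; rw [mem_range] at ha ⊢; omega
      · intro a ha hna
        rw [mem_range] at ha hna
        have hz : (n-a).choose s = 0 := Nat.choose_eq_zero_of_lt (by omega)
        refine Finset.sum_eq_zero fun b hb => ?_
        rw [hA]; simp [hz]
    rw [Finset.sum_congr rfl h1, h2]
  have hR : (∑ i ∈ range (n+1), ∑ c ∈ range (i+1), ∑ d ∈ range (i+1),
        (n.choose i : ℂ) / (i.factorial) * (i.choose c) * (i.choose d) *
          (-w)^(i-c) * (-v)^(i-d) * (j.descFactorial (c + d + (n - i)) : ℂ))
      = ∑ s ∈ range (n+1), ∑ a ∈ range (n-s+1), ∑ b ∈ range (n-s+1), A s a b := by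
    rw [sum_range_reflect'']
    refine Finset.sum_congr rfl fun s hs => ?_
    rw [mem_range] at hs
    rw [sum_range_reflect'']
    refine Finset.sum_congr rfl fun a ha => ?_
    rw [mem_range] at ha
    rw [sum_range_reflect'']
    refine Finset.sum_congr rfl fun b hb => ?_
    rw [mem_range] at hb
    have e1 : n - s - (n - s - a) = a := by omega
    have e2 : n - s - (n - s - b) = b := by omega
    have e4 : (n - s - a) + (n - s - b) + (n - (n - s)) = (n - a) + (n - b) - s := by omega
    rw [e1, e2, e4]
    rw [Nat.choose_symm (show a ≤ n - s by omega), Nat.choose_symm (show b ≤ n - s by omega),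
        Nat.choose_symm (show s ≤ n by omega)]
    simp only [hA]
    have e7 : n - a - s = n - s - a := by omega
    have e8 : n - b - s = n - s - b := by omega
    have t1 : (((n-s).choose a : ℕ) : ℂ) * a.factorial * (n-s-a).factorial
        = ((n-s).factorial : ℂ) := by
      exact_mod_cast Nat.choose_mul_factorial_mul_factorial (show a ≤ n - s by omega)
    have t2 : (((n-s).choose b : ℕ) : ℂ) * b.factorial * (n-s-b).factorial
        = ((n-s).factorial : ℂ) := by
      exact_mod_cast Nat.choose_mul_factorial_mul_factorial (show b ≤ n - s by omega)
    have t3 : ((n.choose s : ℕ) : ℂ) * s.factorial * (n-s).factorial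
        = (n.factorial : ℂ) := by
      exact_mod_cast Nat.choose_mul_factorial_mul_factorial (show s ≤ n by omega)
    have t4n := Nat.choose_mul_factorial_mul_factorial (show s ≤ n - a by omega)
    rw [e7] at t4n
    have t4 : (((n-a).choose s : ℕ) : ℂ) * s.factorial * (n-s-a).factorial
        = ((n-a).factorial : ℂ) := by exact_mod_cast t4n
    have t5n := Nat.choose_mul_factorial_mul_factorial (show s ≤ n - b by omega)
    rw [e8] at t5n
    have t5 : (((n-b).choose s : ℕ) : ℂ) * s.factorial * (n-s-b).factorial
        = ((n-b).factorial : ℂ) := by exact_mod_cast t5n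
    have f0 : ∀ m : ℕ, ((m.factorial : ℕ) : ℂ) ≠ 0 := fun m =>
      Nat.cast_ne_zero.mpr (Nat.factorial_ne_zero m)
    have hK0 : ((s.factorial : ℕ) : ℂ) * ((n-s-a).factorial : ℂ) * ((n-s-b).factorial : ℂ) ≠ 0 :=
      mul_ne_zero (mul_ne_zero (f0 s) (f0 (n-s-a))) (f0 (n-s-b))
    have hG : ((n.choose s : ℕ) : ℂ) * ((n-s).choose a) * ((n-s).choose b) *
          (a.factorial * (n-a).factorial * b.factorial * (n-b).factorial)
        = (n.factorial : ℂ) * ((n-a).choose s) * ((n-b).choose s) * s.factorial *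
            (n-s).factorial := by
      apply mul_right_cancel₀ hK0
      linear_combination
        (((n.choose s : ℕ) : ℂ) * s.factorial * ((n-a).factorial) * ((n-b).factorial) *
            (((n-s).choose b : ℕ) * (b.factorial : ℂ) * (n-s-b).factorial)) * t1 +
        (((n.choose s : ℕ) : ℂ) * s.factorial * ((n-a).factorial) * ((n-b).factorial) *
            ((n-s).factorial : ℂ)) * t2 +
        (((n-a).factorial : ℂ) * ((n-b).factorial) * ((n-s).factorial)) * t3 -
        ((n.factorial : ℂ) * ((n-s).factorial) *
            (((n-b).choose s : ℕ) * (s.factorial : ℂ) * (n-s-b).factorial)) * t4 -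
        ((n.factorial : ℂ) * ((n-s).factorial) * ((n-a).factorial : ℂ)) * t5
    have gden : ((a.factorial : ℕ) : ℂ) * ((n-a).factorial) * (b.factorial) *
        ((n-b).factorial) ≠ 0 :=
      mul_ne_zero (mul_ne_zero (mul_ne_zero (f0 a) (f0 (n-a))) (f0 b)) (f0 (n-b))
    rw [neg_pow w, neg_pow v]
    simp only [div_mul_eq_mul_div]
    rw [div_eq_div_iff (f0 (n-s)) gden]
    linear_combination ((-1:ℂ))^(a+b) * w^a * v^b *
      ((j.descFactorial ((n-a) + (n-b) - s) : ℕ) : ℂ) * hG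
  rw [hL, hR]

lemma prodIcoFact' {i n : ℕ} (h : i ≤ n) :
    (∏ t ∈ Finset.Ico i n, (t+1)) * i.factorial = n.factorial := by
  induction n, h using Nat.le_induction with
  | base => simp
  | succ n h ih =>
    rw [Finset.prod_Ico_succ_top h, Nat.factorial_succ, mul_comm (n+1) n.factorial, ← ih]
    ring

lemma prodIcoChoose' {i n : ℕ} (h : i ≤ n) :
    (∏ t ∈ Finset.Ico i n, (t+1)) = n.choose i * (n - i).factorial := by
  apply Nat.eq_of_mul_eq_mul_right i.factorial_pos
  rw [prodIcoFact' h, ← Nat.choose_mul_factorial_mul_factorial h]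
  ring

lemma Pkey' (n : ℕ) (z w v : ℂ) (hz : z ≠ 0) :
    ∑ i ∈ range (n+1), ∑ c ∈ range (i+1), ∑ d ∈ range (i+1),
      (n.choose i : ℂ) / (i.factorial) * (i.choose c) * (i.choose d) *
        (-w)^(i-c) * (-v)^(i-d) * z^(c+d+(n-i))
    = z^n * glagC n 0 (w + v - z - w*v/z) := by
  unfold glagC
  rw [Finset.mul_sum]
  refine Finset.sum_congr rfl fun i hi => ?_
  rw [mem_range] at hi
  have hin : i ≤ n := by omega
  have f0 : ∀ m : ℕ, ((m.factorial : ℕ) : ℂ) ≠ 0 := fun m =>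
    Nat.cast_ne_zero.mpr (Nat.factorial_ne_zero m)
  have hp : (∏ t ∈ Finset.Ico i n, (((0:ℤ) : ℂ) + t + 1))
      = ((n.choose i : ℕ) : ℂ) * ((n-i).factorial : ℕ) := by
    have : ∀ t ∈ Finset.Ico i n, (((0:ℤ) : ℂ) + t + 1) = ((t + 1 : ℕ) : ℂ) := by
      intro t ht; push_cast; ring
    rw [Finset.prod_congr rfl this, ← Nat.cast_prod, prodIcoChoose' hin]
    push_cast; ring
  have hu : w + v - z - w*v/z = -((z + -w) * (z + -v) / z) := by
    field_simp; ring
  calc ∑ c ∈ range (i+1), ∑ d ∈ range (i+1),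
        (n.choose i : ℂ) / (i.factorial) * (i.choose c) * (i.choose d) *
          (-w)^(i-c) * (-v)^(i-d) * z^(c+d+(n-i))
      = (n.choose i : ℂ) / (i.factorial) * z^(n-i) * ((z + -w)^i * (z + -v)^i) := by
        rw [add_pow, add_pow, Finset.sum_mul_sum, Finset.mul_sum]
        refine Finset.sum_congr rfl fun c hc => ?_
        rw [Finset.mul_sum]
        refine Finset.sum_congr rfl fun d hd => ?_
        rw [pow_add, pow_add]
        ring
    _ = z ^ n * ((-1:ℂ)^i / (i.factorial) *
          ((∏ t ∈ Finset.Ico i n, (((0:ℤ) : ℂ) + t + 1)) / ((n-i).factorial)) *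
          (w + v - z - w*v/z)^i) := by
        rw [hp, hu, neg_pow ((z + -w) * (z + -v) / z), div_pow, mul_pow]
        have hzz : z ^ n = z^(n-i) * z^i := by rw [← pow_add]; congr 1; omega
        rw [hzz]
        have hzi : z ^ i ≠ 0 := pow_ne_zero _ hz
        rw [mul_div_cancel_right₀ _ (f0 (n-i))]
        have hq : ((z + -w)^i * (z + -v)^i) / z^i * z^i = (z + -w)^i * (z + -v)^i :=
          div_mul_cancel₀ _ hzi
        have hsq : ((-1:ℂ))^i * ((-1:ℂ))^i = 1 := by rw [← mul_pow]; norm_num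
        linear_combination
          (-((n.choose i : ℂ) / (i.factorial : ℂ)) * z^(n-i)) * hq +
          (-((n.choose i : ℂ) / (i.factorial : ℂ)) * z^(n-i) * z^i *
            (((z + -w)^i * (z + -v)^i) / z^i)) * hsq

lemma dfactShift' (m K : ℕ) : (m + K).descFactorial K * m.factorial = (m + K).factorial := by
  induction K with
  | zero => simp
  | succ K ih =>
    have : m + (K + 1) = (m + K) + 1 := by omega
    rw [this, Nat.succ_descFactorial_succ, Nat.factorial_succ, mul_assoc, ih]

lemma expSummable' (z : ℂ) : Summable (fun m : ℕ => z ^ m / m.factorial) := by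
  apply Summable.of_norm
  have := Real.summable_pow_div_factorial ‖z‖
  refine this.congr fun m => ?_
  simp [norm_div, norm_pow]

lemma expTsum' (z : ℂ) : Complex.exp z = ∑' m : ℕ, z ^ m / m.factorial := by
  rw [Complex.exp_eq_exp_ℂ, NormedSpace.exp_eq_tsum_div]

lemma seriesShift' (z : ℂ) (K : ℕ) (m : ℕ) :
    z ^ (m + K) * ((m + K).descFactorial K : ℂ) / (m + K).factorial
      = z ^ K * (z ^ m / m.factorial) := by
  have f0 : ∀ r : ℕ, ((r.factorial : ℕ) : ℂ) ≠ 0 := fun r =>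
    Nat.cast_ne_zero.mpr (Nat.factorial_ne_zero r)
  have hc : (((m + K).descFactorial K : ℕ) : ℂ) * m.factorial = ((m + K).factorial : ℂ) := by
    exact_mod_cast congrArg (fun r : ℕ => (r : ℂ)) (dfactShift' m K)
  rw [← mul_div_assoc, div_eq_div_iff (f0 (m + K)) (f0 m)]
  linear_combination (z ^ (m + K)) * hc

lemma seriesSummable' (z : ℂ) (K : ℕ) :
    Summable (fun j : ℕ => z ^ j * (j.descFactorial K : ℂ) / j.factorial) := by
  rw [← summable_nat_add_iff K]
  refine Summable.congr (((expSummable' z).mul_left (z ^ K))) fun m => ?_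
  exact (seriesShift' z K m).symm

lemma seriesTsum' (z : ℂ) (K : ℕ) :
    ∑' j : ℕ, z ^ j * (j.descFactorial K : ℂ) / j.factorial = z ^ K * Complex.exp z := by
  have hsum := seriesSummable' z K
  rw [← Summable.sum_add_tsum_nat_add K hsum]
  have h1 : (∑ i ∈ range K, z ^ i * (i.descFactorial K : ℂ) / i.factorial) = 0 := by
    refine Finset.sum_eq_zero fun i hi => ?_
    rw [mem_range] at hi
    rw [Nat.descFactorial_eq_zero_iff_lt.mpr hi]
    simp
  rw [h1, zero_add]
  calc (∑' m : ℕ, z ^ (m + K) * ((m + K).descFactorial K : ℂ) / (m + K).factorial)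
      = ∑' m : ℕ, z ^ K * (z ^ m / m.factorial) := tsum_congr (seriesShift' z K)
    _ = z ^ K * ∑' m : ℕ, z ^ m / m.factorial := tsum_mul_left
    _ = z ^ K * Complex.exp z := by rw [← expTsum']

lemma glagE (n : ℕ) (k : ℤ) (t : ℝ) : ((glag n k t : ℝ) : ℂ) = glagC n k (t : ℂ) := by
  unfold glag glagC
  push_cast
  rfl

end BatemanAux

theorem stmt16 (n : ℕ) (x y θ : ℝ) (hxy : x * y ≠ 0) :
    Complex.exp ((x : ℂ) * y * Complex.exp (Complex.I * θ)) *
        (lag n (x ^ 2 + y ^ 2 - 2 * x * y * Real.cos θ) : ℂ) =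
      ∑' j : ℕ, ((x : ℂ) * y * Complex.exp (Complex.I * θ)) ^ ((j : ℤ) - n) *
        ((Nat.factorial n : ℂ) / (Nat.factorial j)) *
        (glag n ((j : ℤ) - n) (x ^ 2) : ℂ) * (glag n ((j : ℤ) - n) (y ^ 2) : ℂ) := by
  classical
  have hx : (x : ℂ) ≠ 0 := by
    simp only [ne_eq, Complex.ofReal_eq_zero]
    intro h; apply hxy; rw [h]; ring
  have hy : (y : ℂ) ≠ 0 := by
    simp only [ne_eq, Complex.ofReal_eq_zero]
    intro h; apply hxy; rw [h]; ring
  set z : ℂ := (x : ℂ) * y * Complex.exp (Complex.I * θ) with hzdef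
  have hexpne : Complex.exp (Complex.I * θ) ≠ 0 := Complex.exp_ne_zero _
  have hz : z ≠ 0 := mul_ne_zero (mul_ne_zero hx hy) hexpne
  have hzn : z ^ n ≠ 0 := pow_ne_zero _ hz
  set w : ℂ := (x : ℂ) ^ 2 with hwdef
  set v : ℂ := (y : ℂ) ^ 2 with hvdef
  -- the argument of lag, complexified
  have e1 : Complex.exp (Complex.I * θ) = Complex.cos θ + Complex.sin θ * Complex.I := by
    rw [mul_comm, Complex.exp_mul_I]
  have e2 : Complex.exp (-(Complex.I * θ)) = Complex.cos θ - Complex.sin θ * Complex.I := by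
    rw [show -(Complex.I * (θ:ℂ)) = (-(θ:ℂ)) * Complex.I by ring, Complex.exp_mul_I,
      Complex.cos_neg, Complex.sin_neg]
    ring
  have hwv : w * v / z = (x : ℂ) * y * Complex.exp (-(Complex.I * θ)) := by
    rw [Complex.exp_neg, hzdef, hwdef, hvdef]
    field_simp
  have hrc : ((x ^ 2 + y ^ 2 - 2 * x * y * Real.cos θ : ℝ) : ℂ) = w + v - z - w * v / z := by
    rw [hwv]
    push_cast
    rw [hzdef, hwdef, hvdef, e1, e2]
    ring
  -- per-term rewriting of the series
  have key : ∀ j : ℕ,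
      z ^ ((j : ℤ) - n) * ((Nat.factorial n : ℂ) / (Nat.factorial j)) *
          (glag n ((j : ℤ) - n) (x ^ 2) : ℂ) * (glag n ((j : ℤ) - n) (y ^ 2) : ℂ)
        = (z ^ n)⁻¹ * ∑ i ∈ range (n+1), ∑ c ∈ range (i+1), ∑ d ∈ range (i+1),
            ((n.choose i : ℂ) / (i.factorial) * (i.choose c) * (i.choose d) *
              (-w)^(i-c) * (-v)^(i-d)) *
              (z ^ j * (j.descFactorial (c + d + (n - i)) : ℂ) / j.factorial) := by
    intro j
    have hgw : (glag n ((j : ℤ) - n) (x ^ 2) : ℂ) = glagC n ((j : ℤ) - n) w := by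
      rw [glagE]; congr 1; push_cast; ring
    have hgv : (glag n ((j : ℤ) - n) (y ^ 2) : ℂ) = glagC n ((j : ℤ) - n) v := by
      rw [glagE]; congr 1; push_cast; ring
    rw [hgw, hgv, zpow_sub₀ hz, zpow_natCast, zpow_natCast]
    have hstep : z ^ j / z ^ n * ((Nat.factorial n : ℂ) / (Nat.factorial j)) *
          glagC n ((j : ℤ) - n) w * glagC n ((j : ℤ) - n) v
        = (z ^ n)⁻¹ * (z ^ j / (j.factorial) *
            ((n.factorial : ℂ) * glagC n ((j : ℤ) - n) w * glagC n ((j : ℤ) - n) v)) := by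
      field_simp
    rw [hstep, Fkey' n j w v, Finset.mul_sum]
    congr 1
    refine Finset.sum_congr rfl fun i _ => ?_
    rw [Finset.mul_sum]
    refine Finset.sum_congr rfl fun c _ => ?_
    rw [Finset.mul_sum]
    refine Finset.sum_congr rfl fun d _ => ?_
    ring
  rw [tsum_congr key, tsum_mul_left]
  -- swap tsum and finite sums
  have hsummand : ∀ (i c d : ℕ), Summable (fun j : ℕ =>
      ((n.choose i : ℂ) / (i.factorial) * (i.choose c) * (i.choose d) *
        (-w)^(i-c) * (-v)^(i-d)) *
        (z ^ j * (j.descFactorial (c + d + (n - i)) : ℂ) / j.factorial)) := by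
    intro i c d
    exact (seriesSummable' z (c + d + (n - i))).mul_left _
  have hswap : (∑' j : ℕ, ∑ i ∈ range (n+1), ∑ c ∈ range (i+1), ∑ d ∈ range (i+1),
      ((n.choose i : ℂ) / (i.factorial) * (i.choose c) * (i.choose d) *
        (-w)^(i-c) * (-v)^(i-d)) *
        (z ^ j * (j.descFactorial (c + d + (n - i)) : ℂ) / j.factorial))
      = ∑ i ∈ range (n+1), ∑ c ∈ range (i+1), ∑ d ∈ range (i+1),
          ((n.choose i : ℂ) / (i.factorial) * (i.choose c) * (i.choose d) *
            (-w)^(i-c) * (-v)^(i-d)) * (z ^ (c + d + (n - i)) * Complex.exp z) := by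
    rw [Summable.tsum_finsetSum (fun i _ => summable_sum (fun c _ => summable_sum (fun d _ => hsummand i c d)))]
    refine Finset.sum_congr rfl fun i _ => ?_
    rw [Summable.tsum_finsetSum (fun c _ => summable_sum (fun d _ => hsummand i c d))]
    refine Finset.sum_congr rfl fun c _ => ?_
    rw [Summable.tsum_finsetSum (fun d _ => hsummand i c d)]
    refine Finset.sum_congr rfl fun d _ => ?_
    rw [tsum_mul_left, seriesTsum']
  rw [hswap]
  -- evaluate the polynomial sum
  have hpoly : (∑ i ∈ range (n+1), ∑ c ∈ range (i+1), ∑ d ∈ range (i+1),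
      ((n.choose i : ℂ) / (i.factorial) * (i.choose c) * (i.choose d) *
        (-w)^(i-c) * (-v)^(i-d)) * (z ^ (c + d + (n - i)) * Complex.exp z))
      = (z ^ n * glagC n 0 (w + v - z - w * v / z)) * Complex.exp z := by
    rw [← Pkey' n z w v hz, Finset.sum_mul]
    refine Finset.sum_congr rfl fun i _ => ?_
    rw [Finset.sum_mul]
    refine Finset.sum_congr rfl fun c _ => ?_
    rw [Finset.sum_mul]
    refine Finset.sum_congr rfl fun d _ => ?_
    ring
  rw [hpoly]
  -- finish
  have hlag : (lag n (x ^ 2 + y ^ 2 - 2 * x * y * Real.cos θ) : ℂ)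
      = glagC n 0 (w + v - z - w * v / z) := by
    unfold lag
    rw [glagE, hrc]
  rw [hlag]
  rw [← mul_assoc, ← mul_assoc, inv_mul_cancel₀ hzn, one_mul]
  ring
end
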